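/- (Part of Theorem 2: I_h is a homotopy invariant of virtual pseudoknots.) The map I_h descends to an invariant of the equivalence relation on pseudo-Gauss diagrams generated by the Gauss-diagrammatic Reidemeister moves together with crossing changes: if two pseudo-Gauss diagrams P and Q are related by a finite sequence of (a) insertions/deletions of a classical chord (with either sign) or a prechord with cyclically adjacent endpoints (R1 and PR1), (b) insertions/deletions of a pair of classical chords e₁ = {a, b+1}, e₂ = {a+1, b} with arbitrary signs, where a, a+1 and b, b+1 are disjoint pairs of cyclically adjacent points (R2), (c) transpositions p ↔ p+1, q ↔ q+1, r ↔ r+1 within three disjoint pairs of cyclically adjacent points whose union is the union of three classical chords (R3), and (d) crossing changes negating the sign of a single classical chord, then I_h(P) and I_h(Q) are equivalent ℤ/2-labeled chord diagrams. -/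
import Mathlib


/-!
Formalization framework for pseudo-Gauss diagrams (Gauss diagrams of
virtual pseudoknots), the interlacement-based invariants `I` and `I_h`,
and the Gauss-diagrammatic Reidemeister moves.
-/

noncomputable section
open scoped Classical

/-- The cyclic successor of a point on the circle `Fin n` (i.e. `x + 1` mod `n`),
so that `x` and `csucc x` are cyclically adjacent. -/
def csucc {n : ℕ} (x : Fin n) : Fin n :=
  ⟨(x.val + 1) % n, Nat.mod_lt _ x.pos⟩

/-- `CycBtw a x b` : the point `x` lies in the open cyclic interval from `a` to `b`. -/
def CycBtw {n : ℕ} (a x b : Fin n) : Prop :=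
  if a < b then a < x ∧ x < b else x < b ∨ a < x

/-- Two chords `c` and `d` (recorded as two-element finsets of points) are
interlaced if exactly one endpoint of `d` lies in the open cyclic interval
determined by the two endpoints of `c`. -/
def Interlaced {n : ℕ} (c d : Finset (Fin n)) : Prop :=
  ∃ a b : Fin n, a ≠ b ∧ c = {a, b} ∧ (d.filter fun x => CycBtw a x b).card = 1

/-- A pseudo-Gauss diagram with `m` crossings: the points of `Fin (2*m)` in their
natural cyclic order, partitioned into `m` two-element chords; each chord is either
classical or a prechord (member of `pre`), and each classical chord carries a
sign `±1`. -/
structure PGD (m : ℕ) where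
  /-- the chords, a partition of `Fin (2*m)` into two-element subsets -/
  chords : Finset (Finset (Fin (2 * m)))
  two_mem : ∀ c ∈ chords, c.card = 2
  partition : ∀ x : Fin (2 * m), ∃! c, c ∈ chords ∧ x ∈ c
  /-- the prechords -/
  pre : Finset (Finset (Fin (2 * m)))
  pre_sub : pre ⊆ chords
  /-- the sign, relevant on classical chords -/
  sign : Finset (Fin (2 * m)) → ℤ
  sign_pm : ∀ c ∈ chords \ pre, sign c = 1 ∨ sign c = -1

namespace PGD

/-- The classical chords of a pseudo-Gauss diagram. -/
def classicalChords {m : ℕ} (P : PGD m) : Finset (Finset (Fin (2 * m))) :=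
  P.chords \ P.pre

/-- `i(c)` : the sum of the signs of the classical chords interlaced with `c`. -/
def iLabel {m : ℕ} (P : PGD m) (c : Finset (Fin (2 * m))) : ℤ :=
  ∑ d ∈ P.classicalChords.filter (fun d => Interlaced c d), P.sign d

/-- `p(c)` : the parity (in `ℤ/2`) of the number of classical chords interlaced with `c`. -/
def pLabel {m : ℕ} (P : PGD m) (c : Finset (Fin (2 * m))) : ZMod 2 :=
  ((P.classicalChords.filter (fun d => Interlaced c d)).card : ZMod 2)

/-- The endpoints of the prechords of `P`. -/
def preEndpoints {m : ℕ} (P : PGD m) : Finset (Fin (2 * m)) :=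
  P.pre.sup id

/-- The renumbering (in cyclic order, starting from `0`) of the prechord
endpoints of `P`. -/
def idx {m : ℕ} (P : PGD m) (x : Fin (2 * m)) : ℕ :=
  (P.preEndpoints.filter fun y => y < x).card

end PGD

/-- A labeled chord diagram with labels in `α`: points `0, 1, …, points - 1`
in their natural cyclic order, a collection of chords, and a label attached
to each chord. -/
structure LCD (α : Type) where
  points : ℕ
  chords : Finset (Finset ℕ)
  label : Finset ℕ → α

/-- Well-formedness of a labeled chord diagram: the chords are two-element
subsets of `{0, …, points-1}` partitioning the point set. -/
def LCD.WF {α : Type} (D : LCD α) : Prop :=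
  (∀ c ∈ D.chords, ∀ x ∈ c, x < D.points) ∧
  (∀ c ∈ D.chords, c.card = 2) ∧
  (∀ x, x < D.points → ∃! c, c ∈ D.chords ∧ x ∈ c)

/-- A bijection of the point sets preserving the cyclic order, the chords and
the labels (a cyclic-order-preserving bijection of `{0,…,N-1}` is a rotation). -/
def RotMove {α : Type} (D D' : LCD α) : Prop :=
  D.points = D'.points ∧
  ∃ t : ℕ,
    D'.chords = D.chords.image (fun c => c.image fun x => (x + t) % D.points) ∧
    ∀ c ∈ D.chords, D'.label (c.image fun x => (x + t) % D.points) = D.label c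

/-- Insertion of a chord with cyclically adjacent endpoints and label `0`
(at the canonical position: the two new points come last); its inverse is the
deletion of such a chord together with its two endpoints.  Together with
`RotMove` this generates insertion/deletion at an arbitrary cyclic position. -/
def InsMove {α : Type} [Zero α] (D D' : LCD α) : Prop :=
  D'.points = D.points + 2 ∧
  ({D.points, D.points + 1} : Finset ℕ) ∉ D.chords ∧
  D'.chords = insert ({D.points, D.points + 1} : Finset ℕ) D.chords ∧
  D'.label ({D.points, D.points + 1} : Finset ℕ) = 0 ∧
  ∀ c ∈ D.chords, D'.label c = D.label c

/-- One step of equivalence of (well-formed) labeled chord diagrams. -/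
def LCDStep {α : Type} [Zero α] (D D' : LCD α) : Prop :=
  D.WF ∧ D'.WF ∧ (RotMove D D' ∨ InsMove D D' ∨ InsMove D' D)

/-- Equivalence of labeled chord diagrams: the equivalence relation generated by
cyclic-order-preserving bijections and insertion/deletion of `0`-labeled chords
with cyclically adjacent endpoints. -/
def LCDEquiv {α : Type} [Zero α] : LCD α → LCD α → Prop :=
  Relation.EqvGen LCDStep

/-- The invariant `I` : the `ℤ`-labeled chord diagram whose points are the
endpoints of the prechords of `P` (with the induced cyclic order), whose chords
are the prechords of `P`, and whose label on each prechord `c` is `i(c)`. -/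
def PGD.Imap {m : ℕ} (P : PGD m) : LCD ℤ where
  points := P.preEndpoints.card
  chords := P.pre.image fun c => c.image P.idx
  label := fun c' => ∑ c ∈ P.pre.filter (fun c => c.image P.idx = c'), P.iLabel c

/-- The invariant `I_h` : the `ℤ/2`-labeled chord diagram whose points are the
endpoints of the prechords of `P`, whose chords are the prechords of `P`, and
whose label on each prechord `c` is `p(c)`. -/
def PGD.Ihmap {m : ℕ} (P : PGD m) : LCD (ZMod 2) where
  points := P.preEndpoints.card
  chords := P.pre.image fun c => c.image P.idx
  label := fun c' => ∑ c ∈ P.pre.filter (fun c => c.image P.idx = c'), P.pLabel c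

/-- The renumbering of the points remaining after deleting the points of `E`:
the new index of `x` is obtained by collapsing, in cyclic order, the deleted
points below `x`. -/
def ren {n : ℕ} (E : Finset (Fin n)) (x : Fin n) : ℕ :=
  x.val - (E.filter fun y => y < x).card

/-- `Reduces P' R P` : the pseudo-Gauss diagram `P` is obtained from `P'` by
deleting the chords of `R` together with all of their endpoints, renumbering
the remaining points in cyclic order, and keeping all markings and signs. -/
def Reduces {m' m : ℕ} (P' : PGD m') (R : Finset (Finset (Fin (2 * m')))) (P : PGD m) : Prop :=
  R ⊆ P'.chords ∧
  (∀ c ∈ P'.chords, c ∉ R →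
    ∃ c' ∈ P.chords,
      c.image (ren (R.sup id)) = c'.image Fin.val ∧
      (c ∈ P'.pre ↔ c' ∈ P.pre) ∧
      P'.sign c = P.sign c') ∧
  (∀ c' ∈ P.chords, ∃ c ∈ P'.chords, c ∉ R ∧ c.image (ren (R.sup id)) = c'.image Fin.val)

/-- The permutation of the points transposing `p ↔ p+1`, `q ↔ q+1` and `r ↔ r+1`. -/
def tripleSwap {n : ℕ} (p q r : Fin n) (x : Fin n) : Fin n :=
  Equiv.swap p (csucc p) (Equiv.swap q (csucc q) (Equiv.swap r (csucc r) x))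

/-- The Reidemeister 3 move on pseudo-Gauss diagrams: `{p, p+1}`, `{q, q+1}`,
`{r, r+1}` are pairwise disjoint pairs of cyclically adjacent points whose union
is the union of three classical chords of `P`, and `P'` is obtained from `P` by
applying the permutation transposing the points within each pair to all chord
endpoints, keeping all markings and signs. -/
def R3Hyp {m : ℕ} (P P' : PGD m) (p q r : Fin (2 * m)) : Prop :=
  Disjoint ({p, csucc p} : Finset (Fin (2 * m))) {q, csucc q} ∧
  Disjoint ({p, csucc p} : Finset (Fin (2 * m))) {r, csucc r} ∧
  Disjoint ({q, csucc q} : Finset (Fin (2 * m))) {r, csucc r} ∧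
  (∃ c₁ ∈ P.classicalChords, ∃ c₂ ∈ P.classicalChords, ∃ c₃ ∈ P.classicalChords,
    ({p, csucc p} ∪ {q, csucc q} ∪ {r, csucc r} : Finset (Fin (2 * m))) = c₁ ∪ c₂ ∪ c₃) ∧
  P'.chords = P.chords.image (fun c => c.image (tripleSwap p q r)) ∧
  P'.pre = P.pre.image (fun c => c.image (tripleSwap p q r)) ∧
  ∀ c ∈ P.chords, P'.sign (c.image (tripleSwap p q r)) = P.sign c

/-- A single Gauss-diagrammatic Reidemeister move or crossing change between
pseudo-Gauss diagrams (for the deletion moves, the deletion direction is given;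
insertion is obtained from the generated equivalence): R1/PR1 deletes a chord
(classical with either sign, or a prechord) with cyclically adjacent endpoints,
R2 deletes a pair of classical chords `{a, b+1}`, `{a+1, b}` with arbitrary
signs spanning two disjoint pairs of cyclically adjacent points, R3 transposes
`p ↔ p+1`, `q ↔ q+1`, `r ↔ r+1` within three disjoint pairs of cyclically
adjacent points whose union is the union of three classical chords, and `cc`
negates the sign of a single classical chord. -/
inductive PKHMove : (Σ m, PGD m) → (Σ m, PGD m) → Prop
  | r1 {m : ℕ} (P' : PGD (m + 1)) (P : PGD m) (t : Fin (2 * (m + 1)))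
      (he : ({t, csucc t} : Finset (Fin (2 * (m + 1)))) ∈ P'.chords)
      (hred : Reduces P' {({t, csucc t} : Finset (Fin (2 * (m + 1))))} P) :
      PKHMove ⟨m + 1, P'⟩ ⟨m, P⟩
  | r2 {m : ℕ} (P' : PGD (m + 2)) (P : PGD m) (a b : Fin (2 * (m + 2)))
      (hdisj : Disjoint ({a, csucc a} : Finset (Fin (2 * (m + 2)))) {b, csucc b})
      (he₁ : ({a, csucc b} : Finset (Fin (2 * (m + 2)))) ∈ P'.classicalChords)
      (he₂ : ({csucc a, b} : Finset (Fin (2 * (m + 2)))) ∈ P'.classicalChords)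
      (hred : Reduces P'
        {({a, csucc b} : Finset (Fin (2 * (m + 2)))), {csucc a, b}} P) :
      PKHMove ⟨m + 2, P'⟩ ⟨m, P⟩
  | r3 {m : ℕ} (P P' : PGD m) (p q r : Fin (2 * m)) (h : R3Hyp P P' p q r) :
      PKHMove ⟨m, P⟩ ⟨m, P'⟩
  | cc {m : ℕ} (P P' : PGD m) (d : Finset (Fin (2 * m)))
      (hd : d ∈ P.classicalChords)
      (hch : P'.chords = P.chords) (hpre : P'.pre = P.pre)
      (hsd : P'.sign d = -P.sign d)
      (hs : ∀ c, c ≠ d → P'.sign c = P.sign c) :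
      PKHMove ⟨m, P⟩ ⟨m, P'⟩

/-! ### Auxiliary lemmas -/

section Aux

open Finset

/-- Decompose an equality of unordered pairs. -/
lemma pair_cases {α : Type*} [DecidableEq α] {a b c d : α}
    (hab : a ≠ b) (h : ({a, b} : Finset α) = {c, d}) :
    (a = c ∧ b = d) ∨ (a = d ∧ b = c) := by
  have ha : a ∈ ({c, d} : Finset α) := h ▸ (by simp)
  have hb : b ∈ ({c, d} : Finset α) := h ▸ (by simp)
  simp only [mem_insert, mem_singleton] at ha hb
  rcases ha with rfl | rfl <;> rcases hb with rfl | rfl <;> tauto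

lemma eq_of_image_eq {α β : Type*} [DecidableEq α] [DecidableEq β] {f : α → β}
    {a b : Finset α}
    (hinj : ∀ x ∈ a ∪ b, ∀ y ∈ a ∪ b, f x = f y → x = y)
    (h : a.image f = b.image f) : a = b := by
  ext x
  constructor
  · intro hx
    have : f x ∈ b.image f := h ▸ Finset.mem_image_of_mem f hx
    rcases Finset.mem_image.1 this with ⟨y, hy, hxy⟩
    have := hinj y (by simp [hy]) x (by simp [hx]) hxy
    rwa [← this]
  · intro hx
    have : f x ∈ a.image f := h ▸ Finset.mem_image_of_mem f hx
    rcases Finset.mem_image.1 this with ⟨y, hy, hxy⟩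
    have := hinj y (by simp [hy]) x (by simp [hx]) hxy
    rwa [← this]

lemma csucc_val {n : ℕ} (x : Fin n) : (csucc x).val = (x.val + 1) % n := rfl

lemma csucc_cases {n : ℕ} (x : Fin n) :
    (csucc x).val = x.val + 1 ∨ ((csucc x).val = 0 ∧ x.val + 1 = n) := by
  rcases Nat.lt_or_ge (x.val + 1) n with h | h
  · exact Or.inl (by rw [csucc_val, Nat.mod_eq_of_lt h])
  · have hn : x.val + 1 = n := le_antisymm x.isLt h
    exact Or.inr ⟨by rw [csucc_val, hn, Nat.mod_self], hn⟩

lemma cycBtw_csucc {n : ℕ} {u v x : Fin n} (hu1 : u ≠ x) (hu2 : u ≠ csucc x)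
    (hv1 : v ≠ x) (hv2 : v ≠ csucc x) :
    (CycBtw u x v ↔ CycBtw u (csucc x) v) := by
  have h1 : u.val ≠ x.val := fun h => hu1 (Fin.ext h)
  have h2 : u.val ≠ (csucc x).val := fun h => hu2 (Fin.ext h)
  have h3 : v.val ≠ x.val := fun h => hv1 (Fin.ext h)
  have h4 : v.val ≠ (csucc x).val := fun h => hv2 (Fin.ext h)
  have hun : u.val < n := u.isLt
  have hvn : v.val < n := v.isLt
  have hxn : x.val < n := x.isLt
  simp only [CycBtw, Fin.lt_def]
  rcases csucc_cases x with h | ⟨h, hn⟩ <;> rw [h] at h2 h4 ⊢ <;>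
    split_ifs <;> omega

lemma not_cycBtw_csucc {n : ℕ} {x y : Fin n} (h1 : y ≠ x) (h2 : y ≠ csucc x) :
    ¬ CycBtw x y (csucc x) := by
  have h1 : y.val ≠ x.val := fun h => h1 (Fin.ext h)
  have h2 : y.val ≠ (csucc x).val := fun h => h2 (Fin.ext h)
  have hyn : y.val < n := y.isLt
  have hxn : x.val < n := x.isLt
  simp only [CycBtw, Fin.lt_def]
  rcases csucc_cases x with h | ⟨h, hn⟩ <;> rw [h] at h2 ⊢ <;>
    split_ifs <;> omega

lemma cycBtw_compl {n : ℕ} {u v x : Fin n} (hu : x ≠ u) (hv : x ≠ v) (huv : u ≠ v) :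
    (CycBtw v x u ↔ ¬ CycBtw u x v) := by
  have h1 : x.val ≠ u.val := fun h => hu (Fin.ext h)
  have h2 : x.val ≠ v.val := fun h => hv (Fin.ext h)
  have h3 : u.val ≠ v.val := fun h => huv (Fin.ext h)
  simp only [CycBtw, Fin.lt_def]
  split_ifs <;> omega

/-- Characterization of `Interlaced` by a fixed representation of the first chord. -/
lemma interlaced_pair_iff {n : ℕ} {u v : Fin n} {d : Finset (Fin n)} (huv : u ≠ v)
    (hd2 : d.card = 2) (hu : u ∉ d) (hv : v ∉ d) :
    Interlaced {u, v} d ↔ (d.filter fun x => CycBtw u x v).card = 1 := by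
  constructor
  · rintro ⟨a, b, hab, hc, h1⟩
    rcases pair_cases huv hc with ⟨rfl, rfl⟩ | ⟨rfl, rfl⟩
    · exact h1
    · have hcompl : (d.filter fun x => CycBtw u x v) =
          (d.filter fun x => ¬ CycBtw v x u) := by
        apply Finset.filter_congr
        intro x hx
        have hxu : x ≠ v := fun h => hv (h ▸ hx)
        have hxv : x ≠ u := fun h => hu (h ▸ hx)
        exact cycBtw_compl hxu hxv hab
      have := Finset.card_filter_add_card_filter_not
        (s := d) (p := fun x => CycBtw v x u)
      rw [hcompl]
      omega
  · intro h
    exact ⟨u, v, huv, rfl, h⟩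

/-- The numeric analogue of `CycBtw`. -/
def CycBtwN (a x b : ℕ) : Prop := if a < b then a < x ∧ x < b else (x < b ∨ a < x)

/-- The numeric analogue of `Interlaced`. -/
def NInterlaced (S T : Finset ℕ) : Prop :=
  ∃ a b : ℕ, a ≠ b ∧ S = {a, b} ∧ (T.filter fun x => CycBtwN a x b).card = 1

lemma cycBtw_val {n : ℕ} (a x b : Fin n) :
    CycBtw a x b ↔ CycBtwN a.val x.val b.val := by
  unfold CycBtw CycBtwN
  by_cases hab : a < b
  · rw [if_pos hab, if_pos (Fin.lt_def.1 hab)]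
    exact and_congr Fin.lt_def Fin.lt_def
  · rw [if_neg hab, if_neg (fun hh => hab (Fin.lt_def.2 hh))]
    exact or_congr Fin.lt_def Fin.lt_def

lemma interlaced_iff_nInterlaced {n : ℕ} (c d : Finset (Fin n)) :
    Interlaced c d ↔ NInterlaced (c.image Fin.val) (d.image Fin.val) := by
  have hfilt : ∀ a b : Fin n,
      ((d.image Fin.val).filter fun x => CycBtwN a.val x b.val).card
        = (d.filter fun x => CycBtw a x b).card := by
    intro a b
    rw [Finset.filter_image]
    rw [Finset.card_image_of_injOn (Fin.val_injective.injOn)]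
    congr 1
  constructor
  · rintro ⟨a, b, hab, rfl, h1⟩
    refine ⟨a.val, b.val, fun h => hab (Fin.ext h), by simp [Finset.image_insert], ?_⟩
    rw [hfilt a b]; exact h1
  · rintro ⟨a', b', hab', hS, h1⟩
    have ha' : a' ∈ c.image Fin.val := hS ▸ (by simp)
    have hb' : b' ∈ c.image Fin.val := hS ▸ (by simp)
    rcases Finset.mem_image.1 ha' with ⟨a, ha, rfl⟩
    rcases Finset.mem_image.1 hb' with ⟨b, hb, rfl⟩
    have hab : a ≠ b := fun h => hab' (h ▸ rfl)
    have hc : c = {a, b} := by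
      apply Finset.Subset.antisymm
      · intro x hx
        have : x.val ∈ c.image Fin.val := Finset.mem_image_of_mem _ hx
        rw [hS] at this
        simp only [Finset.mem_insert, Finset.mem_singleton] at this ⊢
        rcases this with h | h
        · exact Or.inl (Fin.ext h)
        · exact Or.inr (Fin.ext h)
      · intro x hx
        simp only [Finset.mem_insert, Finset.mem_singleton] at hx
        rcases hx with rfl | rfl <;> assumption
    exact ⟨a, b, hab, hc, by rw [← hfilt a b]; exact h1⟩

lemma cycBtwN_map {φ : ℕ → ℕ} {a b x : ℕ}
    (hab : a < b ↔ φ a < φ b) (hax : a < x ↔ φ a < φ x) (hxa : x < a ↔ φ x < φ a)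
    (hxb : x < b ↔ φ x < φ b) (hbx : b < x ↔ φ b < φ x) :
    (CycBtwN (φ a) (φ x) (φ b) ↔ CycBtwN a x b) := by
  simp only [CycBtwN]
  split_ifs with h1 h2 h2 <;> tauto

/-- `NInterlaced` is invariant under maps that are strictly monotone on the
underlying points. -/
lemma nInterlaced_image {S T : Finset ℕ} {φ : ℕ → ℕ}
    (hmono : ∀ x ∈ S ∪ T, ∀ y ∈ S ∪ T, x < y ↔ φ x < φ y)
    (hS : S.card = 2) :
    NInterlaced (S.image φ) (T.image φ) ↔ NInterlaced S T := by
  have hinj : ∀ x ∈ S ∪ T, ∀ y ∈ S ∪ T, φ x = φ y → x = y := by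
    intro x hx y hy h
    by_contra hne
    rcases Nat.lt_or_ge x y with hlt | hge
    · exact absurd h (Nat.ne_of_lt ((hmono x hx y hy).1 hlt))
    · rcases Nat.lt_or_ge y x with hlt' | hge'
      · exact absurd h.symm (Nat.ne_of_lt ((hmono y hy x hx).1 hlt'))
      · exact hne (le_antisymm hge' hge)
  have hfilt : ∀ a ∈ S, ∀ b ∈ S,
      ((T.image φ).filter fun x => CycBtwN (φ a) x (φ b)).card
        = (T.filter fun x => CycBtwN a x b).card := by
    intro a ha b hb
    rw [Finset.filter_image]
    rw [Finset.card_image_of_injOn]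
    · congr 1
      apply Finset.filter_congr
      intro x hx
      have hm := fun p hp q hq => hmono p hp q hq
      have haS : a ∈ S ∪ T := Finset.mem_union_left _ ha
      have hbS : b ∈ S ∪ T := Finset.mem_union_left _ hb
      have hxT : x ∈ S ∪ T := Finset.mem_union_right _ hx
      exact cycBtwN_map (hm a haS b hbS) (hm a haS x hxT) (hm x hxT a haS)
        (hm x hxT b hbS) (hm b hbS x hxT)
    · intro x hx y hy h
      simp only [Finset.coe_filter, Set.mem_setOf_eq] at hx hy
      exact hinj x (Finset.mem_union_right _ hx.1)
        y (Finset.mem_union_right _ hy.1) h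
  rcases Finset.card_eq_two.1 hS with ⟨s₁, s₂, hs12, rfl⟩
  have hs₁ : s₁ ∈ ({s₁, s₂} : Finset ℕ) := by simp
  have hs₂ : s₂ ∈ ({s₁, s₂} : Finset ℕ) := by simp
  have himg : ({s₁, s₂} : Finset ℕ).image φ = {φ s₁, φ s₂} := by
    simp [Finset.image_insert]
  have hφne : φ s₁ ≠ φ s₂ := fun h =>
    hs12 (hinj s₁ (Finset.mem_union_left _ hs₁) s₂ (Finset.mem_union_left _ hs₂) h)
  constructor
  · rintro ⟨a', b', hab', hS', h1⟩
    rw [himg] at hS'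
    rcases pair_cases hφne hS' with ⟨rfl, rfl⟩ | ⟨rfl, rfl⟩
    · exact ⟨s₁, s₂, hs12, rfl, by rw [← hfilt s₁ hs₁ s₂ hs₂]; exact h1⟩
    · exact ⟨s₂, s₁, hs12.symm, by rw [Finset.pair_comm], by rw [← hfilt s₂ hs₂ s₁ hs₁]; exact h1⟩
  · rintro ⟨a, b, hab, hS', h1⟩
    rcases pair_cases hs12 hS' with ⟨rfl, rfl⟩ | ⟨rfl, rfl⟩
    · exact ⟨φ s₁, φ s₂, hφne, himg, by rw [hfilt s₁ hs₁ s₂ hs₂]; exact h1⟩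
    · exact ⟨φ s₂, φ s₁, hφne.symm, by rw [himg, Finset.pair_comm],
        by rw [hfilt s₂ hs₂ s₁ hs₁]; exact h1⟩

/-- The collapse map on `ℕ` deleting the values in `V`. -/
def collapse (V : Finset ℕ) (k : ℕ) : ℕ := k - (V.filter fun y => y < k).card

lemma collapse_lt_collapse {V : Finset ℕ} {k l : ℕ} (hk : k ∉ V) (hkl : k < l) :
    collapse V k < collapse V l := by
  have h1 : (V.filter fun y => y < k).card ≤ k := by
    have : (V.filter fun y => y < k) ⊆ Finset.range k := by
      intro y hy
      simp only [Finset.mem_filter] at hy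
      simpa using hy.2
    simpa using Finset.card_le_card this
  have hsub : (V.filter fun y => y < l) ⊆
      (V.filter fun y => y < k) ∪ (V.filter fun y => k ≤ y ∧ y < l) := by
    intro y hy
    simp only [Finset.mem_filter, Finset.mem_union] at hy ⊢
    obtain ⟨hyV, hyl⟩ := hy
    rcases Nat.lt_or_ge y k with h | h
    · exact Or.inl ⟨hyV, h⟩
    · exact Or.inr ⟨hyV, h, hyl⟩
  have hIoo : (V.filter fun y => k ≤ y ∧ y < l) ⊆ Finset.Ioo k l := by
    intro y hy
    simp only [Finset.mem_filter] at hy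
    obtain ⟨hyV, hy1, hy2⟩ := hy
    have hyk : y ≠ k := fun h => hk (h ▸ hyV)
    simp only [Finset.mem_Ioo]
    omega
  have h2 : (V.filter fun y => y < l).card ≤
      (V.filter fun y => y < k).card + (l - k - 1) := by
    calc (V.filter fun y => y < l).card
        ≤ ((V.filter fun y => y < k) ∪ (V.filter fun y => k ≤ y ∧ y < l)).card :=
          Finset.card_le_card hsub
      _ ≤ (V.filter fun y => y < k).card + (V.filter fun y => k ≤ y ∧ y < l).card :=
          Finset.card_union_le _ _
      _ ≤ (V.filter fun y => y < k).card + (l - k - 1) := by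
          have := Finset.card_le_card hIoo
          rw [Nat.card_Ioo] at this
          omega
  unfold collapse
  omega

lemma collapse_lt_iff {V : Finset ℕ} {k l : ℕ} (hk : k ∉ V) (hl : l ∉ V) :
    k < l ↔ collapse V k < collapse V l := by
  constructor
  · exact collapse_lt_collapse hk
  · intro h
    by_contra hcon
    push_neg at hcon
    rcases Nat.lt_or_eq_of_le hcon with hlt | rfl
    · exact absurd h (not_lt.2 (le_of_lt (collapse_lt_collapse hl hlt)))
    · exact absurd h (lt_irrefl _)

lemma card_filter_lt_image_val {n : ℕ} (A : Finset (Fin n)) (x : ℕ) :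
    ((A.image Fin.val).filter fun y => y < x).card
      = (A.filter fun y => y.val < x).card := by
  rw [Finset.filter_image]
  exact Finset.card_image_of_injOn (Fin.val_injective.injOn)

lemma ren_eq_collapse {n : ℕ} (E : Finset (Fin n)) (x : Fin n) :
    ren E x = collapse (E.image Fin.val) x.val := by
  unfold ren collapse
  congr 1
  rw [card_filter_lt_image_val]
  congr 1

lemma image_ren_eq {n : ℕ} (E : Finset (Fin n)) (c : Finset (Fin n)) :
    c.image (ren E) = (c.image Fin.val).image (collapse (E.image Fin.val)) := by
  rw [Finset.image_image]
  apply Finset.image_congr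
  intro x _
  exact ren_eq_collapse E x

/-- Rank within a finset is preserved by strictly monotone maps. -/
lemma rank_image {W : Finset ℕ} {φ : ℕ → ℕ}
    (hmono : ∀ x ∈ W, ∀ y ∈ W, x < y ↔ φ x < φ y) {x : ℕ} (hx : x ∈ W) :
    ((W.image φ).filter fun y => y < φ x).card = (W.filter fun y => y < x).card := by
  rw [Finset.filter_image]
  rw [Finset.card_image_of_injOn]
  · congr 1
    apply Finset.filter_congr
    intro y hy
    exact (hmono y hy x hx).symm
  · intro a ha b hb h
    simp only [Finset.coe_filter, Set.mem_setOf_eq] at ha hb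
    by_contra hne
    rcases Nat.lt_or_ge a b with hlt | hge
    · exact absurd h (Nat.ne_of_lt ((hmono a ha.1 b hb.1).1 hlt))
    · rcases Nat.lt_or_ge b a with hlt' | hge'
      · exact absurd h.symm (Nat.ne_of_lt ((hmono b hb.1 a ha.1).1 hlt'))
      · exact hne (le_antisymm hge' hge)

end Aux

section PGDAux

open Finset

namespace PGD

variable {m : ℕ} (P : PGD m)

lemma chords_disjoint {c₁ c₂ : Finset (Fin (2*m))} (h1 : c₁ ∈ P.chords)
    (h2 : c₂ ∈ P.chords) (hne : c₁ ≠ c₂) : ∀ x, x ∈ c₁ → x ∉ c₂ := by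
  intro x hx1 hx2
  rcases P.partition x with ⟨c, _, hu⟩
  exact hne ((hu c₁ ⟨h1, hx1⟩).trans (hu c₂ ⟨h2, hx2⟩).symm)

lemma mem_preEndpoints {x : Fin (2*m)} :
    x ∈ P.preEndpoints ↔ ∃ c ∈ P.pre, x ∈ c := by
  simp [preEndpoints, Finset.mem_sup, id]

lemma idx_lt_idx {x y : Fin (2*m)} (hx : x ∈ P.preEndpoints) (hxy : x < y) :
    P.idx x < P.idx y := by
  have h1 : insert x (P.preEndpoints.filter fun z => z < x) ⊆
      P.preEndpoints.filter fun z => z < y := by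
    intro z hz
    rcases Finset.mem_insert.1 hz with rfl | hz
    · exact Finset.mem_filter.2 ⟨hx, hxy⟩
    · rcases Finset.mem_filter.1 hz with ⟨h2, h3⟩
      exact Finset.mem_filter.2 ⟨h2, lt_trans h3 hxy⟩
  have h2 := Finset.card_le_card h1
  rw [Finset.card_insert_of_notMem (by simp)] at h2
  unfold idx
  omega

lemma idx_lt_card {x : Fin (2*m)} (hx : x ∈ P.preEndpoints) :
    P.idx x < P.preEndpoints.card := by
  apply Finset.card_lt_card
  rw [Finset.ssubset_iff_of_subset (Finset.filter_subset _ _)]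
  exact ⟨x, hx, by simp⟩

lemma idx_injOn {x y : Fin (2*m)} (hx : x ∈ P.preEndpoints)
    (hy : y ∈ P.preEndpoints) (h : P.idx x = P.idx y) : x = y := by
  rcases lt_trichotomy x y with hlt | heq | hlt
  · exact absurd h (Nat.ne_of_lt (P.idx_lt_idx hx hlt))
  · exact heq
  · exact absurd h.symm (Nat.ne_of_lt (P.idx_lt_idx hy hlt))

lemma idx_image_preE :
    P.preEndpoints.image P.idx = Finset.range P.preEndpoints.card := by
  apply Finset.eq_of_subset_of_card_le
  · intro k hk
    rcases Finset.mem_image.1 hk with ⟨x, hx, rfl⟩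
    exact Finset.mem_range.2 (P.idx_lt_card hx)
  · rw [Finset.card_range, Finset.card_image_of_injOn]
    intro x hx y hy h
    exact P.idx_injOn hx hy h

lemma idx_surj {k : ℕ} (hk : k < P.preEndpoints.card) :
    ∃ x ∈ P.preEndpoints, P.idx x = k := by
  have : k ∈ P.preEndpoints.image P.idx := by
    rw [idx_image_preE]; exact Finset.mem_range.2 hk
  exact Finset.mem_image.1 this

lemma mem_preE_of_mem_pre {c : Finset (Fin (2*m))} {x : Fin (2*m)}
    (hc : c ∈ P.pre) (hx : x ∈ c) : x ∈ P.preEndpoints :=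
  (P.mem_preEndpoints).2 ⟨c, hc, hx⟩

lemma pre_card_two {c : Finset (Fin (2*m))} (hc : c ∈ P.pre) : c.card = 2 :=
  P.two_mem c (P.pre_sub hc)

lemma idx_eq_rankv (x : Fin (2*m)) :
    P.idx x = ((P.preEndpoints.image Fin.val).filter fun y => y < x.val).card := by
  rw [card_filter_lt_image_val]
  unfold idx
  congr 1

lemma Ihmap_WF : P.Ihmap.WF := by
  refine ⟨?_, ?_, ?_⟩
  · rintro c hc x hx
    rcases Finset.mem_image.1 hc with ⟨c₀, hc₀, rfl⟩
    rcases Finset.mem_image.1 hx with ⟨y, hy, rfl⟩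
    exact P.idx_lt_card (P.mem_preE_of_mem_pre hc₀ hy)
  · rintro c hc
    rcases Finset.mem_image.1 hc with ⟨c₀, hc₀, rfl⟩
    rw [Finset.card_image_of_injOn, P.pre_card_two hc₀]
    intro x hx y hy h
    exact P.idx_injOn (P.mem_preE_of_mem_pre hc₀ hx)
      (P.mem_preE_of_mem_pre hc₀ hy) h
  · intro k hk
    rcases P.idx_surj hk with ⟨x, hx, rfl⟩
    rcases (P.mem_preEndpoints).1 hx with ⟨c₀, hc₀, hxc₀⟩
    refine ⟨c₀.image P.idx, ⟨Finset.mem_image_of_mem _ hc₀,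
      Finset.mem_image_of_mem _ hxc₀⟩, ?_⟩
    rintro c ⟨hc, hxc⟩
    rcases Finset.mem_image.1 hc with ⟨d₀, hd₀, rfl⟩
    rcases Finset.mem_image.1 hxc with ⟨y, hy, hyx⟩
    have hyE := P.mem_preE_of_mem_pre hd₀ hy
    have : y = x := P.idx_injOn hyE hx hyx
    subst this
    have : d₀ = c₀ := by
      rcases P.partition y with ⟨c, _, hu⟩
      exact (hu d₀ ⟨P.pre_sub hd₀, hy⟩).trans (hu c₀ ⟨P.pre_sub hc₀, hxc₀⟩).symm
    rw [this]

end PGD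

end PGDAux

section RotAux

open Finset

lemma rot_arith {P s x : ℕ} (hP : 0 < P) (hx : x < P) :
    ((x + s) % P + (P - s % P)) % P = x := by
  rw [Nat.mod_add_mod]
  have h3 : s % P + P * (s / P) = s := Nat.mod_add_div s P
  have hslt : s % P < P := Nat.mod_lt _ hP
  have he : x + s + (P - s % P) = x + P * (s / P + 1) := by
    rw [Nat.mul_add, Nat.mul_one]
    omega
  rw [he, ← Nat.mul_comm (s / P + 1) P, Nat.add_mul_mod_self_right,
    Nat.mod_eq_of_lt hx]

lemma rot_arith' {P s x : ℕ} (hP : 0 < P) (hx : x < P) :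
    ((x + (P - s % P)) % P + s) % P = x := by
  rw [Nat.mod_add_mod]
  have h3 : s % P + P * (s / P) = s := Nat.mod_add_div s P
  have hslt : s % P < P := Nat.mod_lt _ hP
  have he : x + (P - s % P) + s = x + P * (s / P + 1) := by
    rw [Nat.mul_add, Nat.mul_one]
    omega
  rw [he, ← Nat.mul_comm (s / P + 1) P, Nat.add_mul_mod_self_right,
    Nat.mod_eq_of_lt hx]

lemma image_rot_rot {P s : ℕ} (hP : 0 < P) (c : Finset ℕ) (hc : ∀ x ∈ c, x < P) :
    ((c.image fun x => (x + s) % P).image fun x => (x + (P - s % P)) % P) = c := by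
  rw [Finset.image_image]
  have : c.image (fun x => ((x + s) % P + (P - s % P)) % P) = c.image id := by
    apply Finset.image_congr
    intro x hx
    exact rot_arith hP (hc x hx)
  rw [show ((fun x => (x + (P - s % P)) % P) ∘ fun x => (x + s) % P)
      = fun x => ((x + s) % P + (P - s % P)) % P from rfl, this, Finset.image_id]

lemma image_rot_rot' {P s : ℕ} (hP : 0 < P) (c : Finset ℕ) (hc : ∀ x ∈ c, x < P) :
    ((c.image fun x => (x + (P - s % P)) % P).image fun x => (x + s) % P) = c := by
  rw [Finset.image_image]
  have : c.image (fun x => ((x + (P - s % P)) % P + s) % P) = c.image id := by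
    apply Finset.image_congr
    intro x hx
    exact rot_arith' hP (hc x hx)
  rw [show ((fun x => (x + s) % P) ∘ fun x => (x + (P - s % P)) % P)
      = fun x => ((x + (P - s % P)) % P + s) % P from rfl, this, Finset.image_id]

/-- Rotation of a labeled chord diagram. -/
def rotLCD {α : Type} (D : LCD α) (s : ℕ) : LCD α where
  points := D.points
  chords := D.chords.image fun c => c.image fun x => (x + s) % D.points
  label := fun c => D.label (c.image fun x => (x + (D.points - s % D.points)) % D.points)

lemma chords_empty_of_WF_points_zero {α : Type} (D : LCD α) (h : D.WF)
    (hP : D.points = 0) : D.chords = ∅ := by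
  rcases Finset.eq_empty_or_nonempty D.chords with he | ⟨c, hc⟩
  · exact he
  · exfalso
    have h2 := h.2.1 c hc
    have : c.Nonempty := Finset.card_pos.1 (by omega)
    rcases this with ⟨x, hx⟩
    have := h.1 c hc x hx
    omega

lemma rotLCD_WF {α : Type} (D : LCD α) (s : ℕ) (h : D.WF) : (rotLCD D s).WF := by
  rcases Nat.eq_zero_or_pos D.points with hP | hP
  · have : D.chords = ∅ := chords_empty_of_WF_points_zero D h hP
    refine ⟨?_, ?_, ?_⟩ <;>
      simp [rotLCD, this, hP]
  · refine ⟨?_, ?_, ?_⟩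
    · rintro c hc x hx
      rcases Finset.mem_image.1 hc with ⟨c₀, hc₀, rfl⟩
      rcases Finset.mem_image.1 hx with ⟨y, _, rfl⟩
      exact Nat.mod_lt _ hP
    · rintro c hc
      rcases Finset.mem_image.1 hc with ⟨c₀, hc₀, rfl⟩
      rw [Finset.card_image_of_injOn, h.2.1 c₀ hc₀]
      intro x hx y hy hxy
      have hx' := h.1 c₀ hc₀ x hx
      have hy' := h.1 c₀ hc₀ y hy
      have := congrArg (fun z => (z + (D.points - s % D.points)) % D.points) hxy
      simpa [rot_arith hP hx', rot_arith hP hy'] using this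
    · intro x hx
      have hx' : x < D.points := hx
      set x₀ := (x + (D.points - s % D.points)) % D.points with hx₀
      have hx₀lt : x₀ < D.points := Nat.mod_lt _ hP
      rcases h.2.2 x₀ hx₀lt with ⟨c₀, ⟨hc₀, hxc₀⟩, hu⟩
      refine ⟨c₀.image fun z => (z + s) % D.points,
        ⟨Finset.mem_image_of_mem _ hc₀, ?_⟩, ?_⟩
      · have : (x₀ + s) % D.points = x := rot_arith' hP hx'
        rw [← this]
        exact Finset.mem_image_of_mem _ hxc₀
      · rintro c ⟨hc, hxc⟩
        rcases Finset.mem_image.1 hc with ⟨d₀, hd₀, rfl⟩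
        rcases Finset.mem_image.1 hxc with ⟨y, hy, hyx⟩
        have hylt := h.1 d₀ hd₀ y hy
        have : y = x₀ := by
          rw [hx₀, ← hyx, rot_arith hP hylt]
        subst this
        rw [hu d₀ ⟨hd₀, hy⟩]

lemma rotLCD_step {α : Type} [Zero α] (D : LCD α) (s : ℕ) (h : D.WF)
    (hP : 0 < D.points) : LCDStep D (rotLCD D s) := by
  refine ⟨h, rotLCD_WF D s h, Or.inl ⟨rfl, s, rfl, ?_⟩⟩
  intro c hc
  show D.label _ = D.label c
  rw [image_rot_rot hP c (h.1 c hc)]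

lemma rotLCD_step' {α : Type} [Zero α] (D : LCD α) (s : ℕ) (h : D.WF)
    (hP : 0 < D.points) : LCDStep (rotLCD D s) D := by
  refine ⟨rotLCD_WF D s h, h, Or.inl ⟨rfl, D.points - s % D.points, ?_, ?_⟩⟩
  · simp only [rotLCD]
    rw [Finset.image_image]
    have : D.chords.image
        ((fun c => c.image fun x => (x + (D.points - s % D.points)) % D.points) ∘
          (fun c => c.image fun x => (x + s) % D.points)) = D.chords.image id := by
      apply Finset.image_congr
      intro c hc
      exact image_rot_rot hP c (h.1 c hc)
    rw [this, Finset.image_id]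
  · intro c hc
    rfl

/-- Deleting a last adjacent chord preserves well-formedness. -/
lemma WF_erase_last {α : Type} (Y : LCD α) (h : Y.WF) (N : ℕ) (hpts : Y.points = N + 2)
    (hsp : ({N, N+1} : Finset ℕ) ∈ Y.chords) :
    (LCD.mk N (Y.chords.erase {N, N+1}) Y.label).WF := by
  refine ⟨?_, ?_, ?_⟩
  · rintro c hc x hx
    have hcY : c ∈ Y.chords := Finset.mem_of_mem_erase hc
    have hne : c ≠ {N, N+1} := Finset.ne_of_mem_erase hc
    have hxlt : x < N + 2 := hpts ▸ h.1 c hcY x hx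
    have hxns : x ∉ ({N, N+1} : Finset ℕ) := by
      intro hxs
      rcases h.2.2 x (by omega : x < Y.points) with ⟨c', _, hu⟩
      exact hne ((hu c ⟨hcY, hx⟩).trans (hu _ ⟨hsp, hxs⟩).symm)
    simp only [Finset.mem_insert, Finset.mem_singleton] at hxns
    push_neg at hxns
    show x < N
    omega
  · rintro c hc
    exact h.2.1 c (Finset.mem_of_mem_erase hc)
  · intro x hx
    have hxN : x < N := hx
    rcases h.2.2 x (by omega : x < Y.points) with ⟨c, ⟨hc, hxc⟩, hu⟩
    have hne : c ≠ {N, N+1} := by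
      rintro rfl
      simp only [Finset.mem_insert, Finset.mem_singleton] at hxc
      omega
    refine ⟨c, ⟨Finset.mem_erase.2 ⟨hne, hc⟩, hxc⟩, ?_⟩
    rintro d ⟨hd, hxd⟩
    exact hu d ⟨Finset.mem_of_mem_erase hd, hxd⟩

end RotAux

section RedAux

open Finset

variable {m' m : ℕ} {P' : PGD m'} {R : Finset (Finset (Fin (2*m')))} {P : PGD m}

lemma red_not_in_E (hred : Reduces P' R P) {c : Finset (Fin (2*m'))}
    (hc : c ∈ P'.chords) (hcR : c ∉ R) {x : Fin (2*m')} (hx : x ∈ c) :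
    x ∉ R.sup id := by
  intro hxE
  rcases Finset.mem_sup.1 hxE with ⟨r, hr, hxr⟩
  exact P'.chords_disjoint hc (hred.1 hr) (fun h => hcR (h ▸ hr)) x hx hxr

lemma red_val_not_in_V (hred : Reduces P' R P) {c : Finset (Fin (2*m'))}
    (hc : c ∈ P'.chords) (hcR : c ∉ R) {x : Fin (2*m')} (hx : x ∈ c) :
    x.val ∉ (R.sup id).image Fin.val := by
  intro hxV
  rcases Finset.mem_image.1 hxV with ⟨y, hy, hxy⟩
  exact red_not_in_E hred hc hcR hx ((Fin.ext hxy.symm : x = y) ▸ hy)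

/-- The chord of `P` corresponding to a chord of `P'` not removed by the reduction. -/
noncomputable def redFwd (hred : Reduces P' R P) (c : Finset (Fin (2*m'))) :
    Finset (Fin (2*m)) :=
  if h : c ∈ P'.chords ∧ c ∉ R then (hred.2.1 c h.1 h.2).choose else ∅

lemma redFwd_spec (hred : Reduces P' R P) {c : Finset (Fin (2*m'))}
    (hc : c ∈ P'.chords) (hcR : c ∉ R) :
    redFwd hred c ∈ P.chords ∧
    c.image (ren (R.sup id)) = (redFwd hred c).image Fin.val ∧
    (c ∈ P'.pre ↔ redFwd hred c ∈ P.pre) ∧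
    P'.sign c = P.sign (redFwd hred c) := by
  unfold redFwd
  rw [dif_pos (⟨hc, hcR⟩ : c ∈ P'.chords ∧ c ∉ R)]
  have h := (hred.2.1 c hc hcR).choose_spec
  exact ⟨h.1, h.2.1, h.2.2.1, h.2.2.2⟩

lemma redFwd_imgval (hred : Reduces P' R P) {c : Finset (Fin (2*m'))}
    (hc : c ∈ P'.chords) (hcR : c ∉ R) :
    (redFwd hred c).image Fin.val
      = (c.image Fin.val).image (collapse ((R.sup id).image Fin.val)) := by
  rw [← (redFwd_spec hred hc hcR).2.1, image_ren_eq]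

lemma redFwd_inj (hred : Reduces P' R P) {c₁ c₂ : Finset (Fin (2*m'))}
    (hc₁ : c₁ ∈ P'.chords) (hc₁R : c₁ ∉ R) (hc₂ : c₂ ∈ P'.chords) (hc₂R : c₂ ∉ R)
    (h : redFwd hred c₁ = redFwd hred c₂) : c₁ = c₂ := by
  have h1 := (redFwd_spec hred hc₁ hc₁R).2.1
  have h2 := (redFwd_spec hred hc₂ hc₂R).2.1
  rw [h] at h1
  apply eq_of_image_eq (f := ren (R.sup id)) ?_ (h1.trans h2.symm)
  intro x hx y hy hxy
  have hxE : x ∉ R.sup id := by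
    rcases Finset.mem_union.1 hx with h' | h'
    exacts [red_not_in_E hred hc₁ hc₁R h', red_not_in_E hred hc₂ hc₂R h']
  have hyE : y ∉ R.sup id := by
    rcases Finset.mem_union.1 hy with h' | h'
    exacts [red_not_in_E hred hc₁ hc₁R h', red_not_in_E hred hc₂ hc₂R h']
  have hxV : x.val ∉ (R.sup id).image Fin.val := by
    intro hv; rcases Finset.mem_image.1 hv with ⟨z, hz, hzx⟩
    exact hxE ((Fin.ext hzx.symm : x = z) ▸ hz)
  have hyV : y.val ∉ (R.sup id).image Fin.val := by
    intro hv; rcases Finset.mem_image.1 hv with ⟨z, hz, hzy⟩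
    exact hyE ((Fin.ext hzy.symm : y = z) ▸ hz)
  rw [ren_eq_collapse, ren_eq_collapse] at hxy
  by_contra hne
  have hvne : x.val ≠ y.val := fun h => hne (Fin.ext h)
  rcases Nat.lt_or_ge x.val y.val with hlt | hge
  · exact absurd hxy (Nat.ne_of_lt ((collapse_lt_iff hxV hyV).1 hlt))
  · rcases Nat.lt_or_eq_of_le hge with hlt' | heq
    · exact absurd hxy.symm (Nat.ne_of_lt ((collapse_lt_iff hyV hxV).1 hlt'))
    · exact hvne heq.symm

lemma redFwd_surj (hred : Reduces P' R P) {c' : Finset (Fin (2*m))}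
    (hc' : c' ∈ P.chords) :
    ∃ c ∈ P'.chords, c ∉ R ∧ redFwd hred c = c' := by
  rcases hred.2.2 c' hc' with ⟨c, hc, hcR, himg⟩
  refine ⟨c, hc, hcR, ?_⟩
  have h1 := (redFwd_spec hred hc hcR).2.1
  apply eq_of_image_eq (f := Fin.val) (fun x _ y _ h => Fin.ext h)
  rw [← h1, himg]

lemma red_chords_eq (hred : Reduces P' R P) :
    (P'.chords \ R).image (redFwd hred) = P.chords := by
  ext c'
  constructor
  · intro hc'
    rcases Finset.mem_image.1 hc' with ⟨c, hc, rfl⟩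
    rcases Finset.mem_sdiff.1 hc with ⟨h1, h2⟩
    exact (redFwd_spec hred h1 h2).1
  · intro hc'
    rcases redFwd_surj hred hc' with ⟨c, hc, hcR, rfl⟩
    exact Finset.mem_image_of_mem _ (Finset.mem_sdiff.2 ⟨hc, hcR⟩)

lemma red_pre_eq (hred : Reduces P' R P) :
    (P'.pre \ R).image (redFwd hred) = P.pre := by
  ext c'
  constructor
  · intro hc'
    rcases Finset.mem_image.1 hc' with ⟨c, hc, rfl⟩
    rcases Finset.mem_sdiff.1 hc with ⟨h1, h2⟩
    exact ((redFwd_spec hred (P'.pre_sub h1) h2).2.2.1).1 h1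
  · intro hc'
    rcases redFwd_surj hred (P.pre_sub hc') with ⟨c, hc, hcR, rfl⟩
    have := ((redFwd_spec hred hc hcR).2.2.1).2 hc'
    exact Finset.mem_image_of_mem _ (Finset.mem_sdiff.2 ⟨this, hcR⟩)

lemma red_CC_eq (hred : Reduces P' R P) :
    (P'.classicalChords \ R).image (redFwd hred) = P.classicalChords := by
  ext c'
  constructor
  · intro hc'
    rcases Finset.mem_image.1 hc' with ⟨c, hc, rfl⟩
    rcases Finset.mem_sdiff.1 hc with ⟨h1, h2⟩
    rcases Finset.mem_sdiff.1 h1 with ⟨h3, h4⟩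
    refine Finset.mem_sdiff.2 ⟨(redFwd_spec hred h3 h2).1, fun hp => ?_⟩
    exact h4 (((redFwd_spec hred h3 h2).2.2.1).2 hp)
  · intro hc'
    rcases Finset.mem_sdiff.1 hc' with ⟨h1, h2⟩
    rcases redFwd_surj hred h1 with ⟨c, hc, hcR, rfl⟩
    refine Finset.mem_image_of_mem _ (Finset.mem_sdiff.2
      ⟨Finset.mem_sdiff.2 ⟨hc, fun hp => ?_⟩, hcR⟩)
    exact h2 (((redFwd_spec hred hc hcR).2.2.1).1 hp)

lemma red_interlaced_iff (hred : Reduces P' R P) {c d : Finset (Fin (2*m'))}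
    (hc : c ∈ P'.chords) (hcR : c ∉ R) (hd : d ∈ P'.chords) (hdR : d ∉ R)
    (hcd : c ≠ d) :
    Interlaced (redFwd hred c) (redFwd hred d) ↔ Interlaced c d := by
  rw [interlaced_iff_nInterlaced, interlaced_iff_nInterlaced c d]
  rw [redFwd_imgval hred hc hcR, redFwd_imgval hred hd hdR]
  apply nInterlaced_image
  · intro x hx y hy
    have hxV : x ∉ (R.sup id).image Fin.val := by
      rcases Finset.mem_union.1 hx with h' | h' <;>
        rcases Finset.mem_image.1 h' with ⟨z, hz, rfl⟩
      exacts [red_val_not_in_V hred hc hcR hz, red_val_not_in_V hred hd hdR hz]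
    have hyV : y ∉ (R.sup id).image Fin.val := by
      rcases Finset.mem_union.1 hy with h' | h' <;>
        rcases Finset.mem_image.1 h' with ⟨z, hz, rfl⟩
      exacts [red_val_not_in_V hred hc hcR hz, red_val_not_in_V hred hd hdR hz]
    exact collapse_lt_iff hxV hyV
  · rw [Finset.card_image_of_injOn (Fin.val_injective.injOn)]
    exact P'.two_mem c hc

lemma red_pLabel (hred : Reduces P' R P) {c : Finset (Fin (2*m'))}
    (hc : c ∈ P'.pre) (hcR : c ∉ R)
    (hR0 : ((((P'.classicalChords ∩ R).filter fun d => Interlaced c d).card : ZMod 2)) = 0) :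
    P.pLabel (redFwd hred c) = P'.pLabel c := by
  unfold PGD.pLabel
  have hsplit : P'.classicalChords
      = (P'.classicalChords \ R) ∪ (P'.classicalChords ∩ R) :=
    (Finset.sdiff_union_inter _ _).symm
  have hdisj : Disjoint (P'.classicalChords \ R) (P'.classicalChords ∩ R) :=
    Finset.sdiff_disjoint.mono_right Finset.inter_subset_right
  have hcards : ((P'.classicalChords.filter fun d => Interlaced c d).card : ZMod 2)
      = (((P'.classicalChords \ R).filter fun d => Interlaced c d).card : ZMod 2)
        + (((P'.classicalChords ∩ R).filter fun d => Interlaced c d).card : ZMod 2) := by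
    rw [← Nat.cast_add, ← Finset.card_union_of_disjoint
      (Finset.disjoint_filter_filter hdisj), ← Finset.filter_union, ← hsplit]
  have hmain : (P.classicalChords.filter fun d => Interlaced (redFwd hred c) d).card
      = ((P'.classicalChords \ R).filter fun d => Interlaced c d).card := by
    rw [← red_CC_eq hred, Finset.filter_image, Finset.card_image_of_injOn]
    · congr 1
      apply Finset.filter_congr
      intro d hd
      rcases Finset.mem_sdiff.1 hd with ⟨hd1, hd2⟩
      rcases Finset.mem_sdiff.1 hd1 with ⟨hd4, hd5⟩
      apply red_interlaced_iff hred (P'.pre_sub hc) hcR hd4 hd2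
      rintro rfl
      exact hd5 hc
    · intro d₁ hd₁ d₂ hd₂ h
      simp only [Finset.coe_filter, Set.mem_setOf_eq] at hd₁ hd₂
      have h₁ := Finset.mem_sdiff.1 hd₁.1
      have h₂ := Finset.mem_sdiff.1 hd₂.1
      have h₁' := Finset.mem_sdiff.1 h₁.1
      have h₂' := Finset.mem_sdiff.1 h₂.1
      exact redFwd_inj hred h₁'.1 h₁.2 h₂'.1 h₂.2 h
  rw [hcards, hR0, add_zero, hmain]

lemma injOn_of_mono {W : Finset ℕ} {φ : ℕ → ℕ}
    (hmono : ∀ x ∈ W, ∀ y ∈ W, x < y ↔ φ x < φ y) : Set.InjOn φ W := by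
  intro x hx y hy h
  by_contra hne
  rcases Nat.lt_or_ge x y with hlt | hge
  · exact absurd h (Nat.ne_of_lt ((hmono x hx y hy).1 hlt))
  · rcases Nat.lt_or_eq_of_le hge with hlt' | heq
    · exact absurd h.symm (Nat.ne_of_lt ((hmono y hy x hx).1 hlt'))
    · exact hne heq.symm

lemma red_W_not_V (hred : Reduces P' R P) {w : ℕ}
    (hw : w ∈ ((P'.pre \ R).sup id).image Fin.val) :
    w ∉ (R.sup id).image Fin.val := by
  rcases Finset.mem_image.1 hw with ⟨x, hx, rfl⟩
  rcases Finset.mem_sup.1 hx with ⟨c, hc, hxc⟩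
  rcases Finset.mem_sdiff.1 hc with ⟨hc1, hc2⟩
  exact red_val_not_in_V hred (P'.pre_sub hc1) hc2 hxc

lemma red_collapse_mono_W (hred : Reduces P' R P) :
    ∀ x ∈ ((P'.pre \ R).sup id).image Fin.val,
      ∀ y ∈ ((P'.pre \ R).sup id).image Fin.val,
        x < y ↔ collapse ((R.sup id).image Fin.val) x
          < collapse ((R.sup id).image Fin.val) y := by
  intro x hx y hy
  exact collapse_lt_iff (red_W_not_V hred hx) (red_W_not_V hred hy)

lemma red_preE_image (hred : Reduces P' R P) :
    P.preEndpoints.image Fin.val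
      = (((P'.pre \ R).sup id).image Fin.val).image
          (collapse ((R.sup id).image Fin.val)) := by
  ext v
  constructor
  · intro hv
    rcases Finset.mem_image.1 hv with ⟨x', hx', rfl⟩
    rcases (P.mem_preEndpoints).1 hx' with ⟨c', hc', hx'c'⟩
    rw [← red_pre_eq hred] at hc'
    rcases Finset.mem_image.1 hc' with ⟨c, hc, rfl⟩
    rcases Finset.mem_sdiff.1 hc with ⟨hc1, hc2⟩
    have : x'.val ∈ (redFwd hred c).image Fin.val := Finset.mem_image_of_mem _ hx'c'
    rw [redFwd_imgval hred (P'.pre_sub hc1) hc2] at this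
    rcases Finset.mem_image.1 this with ⟨w, hw, hwv⟩
    rcases Finset.mem_image.1 hw with ⟨x, hx, rfl⟩
    refine Finset.mem_image.2 ⟨x.val, ?_, hwv⟩
    exact Finset.mem_image_of_mem _ (Finset.mem_sup.2 ⟨c, hc, hx⟩)
  · intro hv
    rcases Finset.mem_image.1 hv with ⟨w, hw, rfl⟩
    rcases Finset.mem_image.1 hw with ⟨x, hx, rfl⟩
    rcases Finset.mem_sup.1 hx with ⟨c, hc, hxc⟩
    rcases Finset.mem_sdiff.1 hc with ⟨hc1, hc2⟩
    have : collapse ((R.sup id).image Fin.val) x.val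
        ∈ (redFwd hred c).image Fin.val := by
      rw [redFwd_imgval hred (P'.pre_sub hc1) hc2]
      exact Finset.mem_image_of_mem _ (Finset.mem_image_of_mem _ hxc)
    rcases Finset.mem_image.1 this with ⟨x', hx', hx'v⟩
    refine Finset.mem_image.2 ⟨x', ?_, hx'v⟩
    refine (P.mem_preEndpoints).2 ⟨redFwd hred c, ?_, hx'⟩
    rw [← red_pre_eq hred]
    exact Finset.mem_image_of_mem _ hc

lemma red_card_preE (hred : Reduces P' R P) :
    P.preEndpoints.card = ((P'.pre \ R).sup id).card := by
  have h1 : P.preEndpoints.card = (P.preEndpoints.image Fin.val).card :=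
    (Finset.card_image_of_injOn (Fin.val_injective.injOn)).symm
  rw [h1, red_preE_image hred,
    Finset.card_image_of_injOn (injOn_of_mono (red_collapse_mono_W hred)),
    Finset.card_image_of_injOn (Fin.val_injective.injOn)]

lemma red_image_idx (hred : Reduces P' R P) {c : Finset (Fin (2*m'))}
    (hc : c ∈ P'.pre) (hcR : c ∉ R) :
    (redFwd hred c).image P.idx
      = (c.image Fin.val).image
          (fun v => ((((P'.pre \ R).sup id).image Fin.val).filter fun w => w < v).card) := by
  have h1 : (redFwd hred c).image P.idx
      = ((redFwd hred c).image Fin.val).image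
          (fun v => ((P.preEndpoints.image Fin.val).filter fun y => y < v).card) := by
    rw [Finset.image_image]
    apply Finset.image_congr
    intro x _
    exact P.idx_eq_rankv x
  rw [h1, redFwd_imgval hred (P'.pre_sub hc) hcR, Finset.image_image]
  apply Finset.image_congr
  intro v hv
  have hvW : v ∈ ((P'.pre \ R).sup id).image Fin.val := by
    rcases Finset.mem_image.1 (Finset.mem_coe.1 hv) with ⟨x, hx, rfl⟩
    exact Finset.mem_image_of_mem _
      (Finset.mem_sup.2 ⟨c, Finset.mem_sdiff.2 ⟨hc, hcR⟩, hx⟩)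
  show ((P.preEndpoints.image Fin.val).filter fun y => y < collapse _ v).card = _
  rw [red_preE_image hred]
  exact rank_image (red_collapse_mono_W hred) hvW

/-- The main reduction lemma: if no prechord is removed and the removed chords
interlace each prechord evenly, then `I_h` is literally unchanged. -/
lemma Ihmap_eq_of_reduces (hred : Reduces P' R P) (hpreR : ∀ c ∈ R, c ∉ P'.pre)
    (hR0 : ∀ c ∈ P'.pre,
      ((((P'.classicalChords ∩ R).filter fun d => Interlaced c d).card : ZMod 2)) = 0) :
    P.Ihmap = P'.Ihmap := by
  have hsd : P'.pre \ R = P'.pre := by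
    apply Finset.sdiff_eq_self_of_disjoint
    exact Finset.disjoint_left.2 (fun _ hc hcR => hpreR _ hcR hc)
  have hrnk : ∀ x : Fin (2*m'),
      ((((P'.pre \ R).sup id).image Fin.val).filter fun w => w < x.val).card
        = P'.idx x := by
    intro x
    rw [hsd]
    exact (P'.idx_eq_rankv x).symm
  have hnotR : ∀ c ∈ P'.pre, c ∉ R := fun c hc hcR => hpreR c hcR hc
  have hpts : P.Ihmap.points = P'.Ihmap.points := by
    show P.preEndpoints.card = P'.preEndpoints.card
    rw [red_card_preE hred, hsd]
    rfl
  have hch : ∀ c ∈ P'.pre, (redFwd hred c).image P.idx = c.image P'.idx := by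
    intro c hc
    rw [red_image_idx hred hc (hnotR c hc), Finset.image_image]
    apply Finset.image_congr
    intro x _
    exact hrnk x
  have hchords : P.Ihmap.chords = P'.Ihmap.chords := by
    show P.pre.image _ = P'.pre.image _
    rw [← red_pre_eq hred, hsd, Finset.image_image]
    apply Finset.image_congr
    intro c hc
    exact hch c hc
  have hlab : P.Ihmap.label = P'.Ihmap.label := by
    funext c''
    show (∑ c' ∈ P.pre.filter _, P.pLabel c') = ∑ c ∈ P'.pre.filter _, P'.pLabel c
    rw [← red_pre_eq hred, hsd, Finset.filter_image,
      Finset.sum_image (fun x hx y hy h => redFwd_inj hred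
        (P'.pre_sub (Finset.mem_filter.1 hx).1) (hnotR x (Finset.mem_filter.1 hx).1)
        (P'.pre_sub (Finset.mem_filter.1 hy).1) (hnotR y (Finset.mem_filter.1 hy).1) h)]
    have hfc : P'.pre.filter (fun a => (redFwd hred a).image P.idx = c'')
        = P'.pre.filter (fun c => c.image P'.idx = c'') := by
      apply Finset.filter_congr
      intro c hc
      rw [hch c hc]
    rw [hfc]
    apply Finset.sum_congr rfl
    intro c hcmem
    rcases Finset.mem_filter.1 hcmem with ⟨hc, _⟩
    exact red_pLabel hred hc (hnotR c hc) (hR0 c hc)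
  have heta : P.Ihmap = ⟨P.Ihmap.points, P.Ihmap.chords, P.Ihmap.label⟩ := rfl
  rw [heta, hpts, hchords, hlab]

end RedAux

section MoveAux

open Finset

lemma card_filter_pair {α : Type*} [DecidableEq α] (p : α → Prop) [DecidablePred p] (x y : α)
    (hxy : x ≠ y) :
    (({x, y} : Finset α).filter p).card
      = (if p x then 1 else 0) + (if p y then 1 else 0) := by
  rw [Finset.filter_insert, Finset.filter_singleton]
  split_ifs <;>
    simp_all [Finset.card_insert_of_notMem, Finset.mem_singleton, hxy]

lemma csucc_ne {n : ℕ} (hn : 2 ≤ n) (t : Fin n) : t ≠ csucc t := by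
  intro h
  have hval := congrArg Fin.val h
  rcases csucc_cases t with h1 | ⟨h1, h2⟩ <;> rw [h1] at hval <;> omega

lemma not_interlaced_adjacent {n : ℕ} {c : Finset (Fin n)} {t : Fin n}
    (hne : t ≠ csucc t) (hd : ∀ x ∈ c, x ≠ t ∧ x ≠ csucc t) :
    ¬ Interlaced c ({t, csucc t} : Finset (Fin n)) := by
  rintro ⟨u, v, huv, hc, hcount⟩
  have hu := hd u (by rw [hc]; simp)
  have hv := hd v (by rw [hc]; simp)
  rw [card_filter_pair _ t (csucc t) hne] at hcount
  have hiff : CycBtw u t v ↔ CycBtw u (csucc t) v :=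
    cycBtw_csucc hu.1 hu.2 hv.1 hv.2
  by_cases h : CycBtw u t v
  · rw [if_pos h, if_pos (hiff.1 h)] at hcount
    omega
  · rw [if_neg h, if_neg (fun hh => h (hiff.2 hh))] at hcount
    omega

lemma interlaced_pair_parity {n : ℕ} {c : Finset (Fin n)} {a b : Fin n}
    (hc2 : c.card = 2) (hab1 : a ≠ csucc b) (hab2 : csucc a ≠ b)
    (hnab : ∀ x ∈ c, x ≠ a ∧ x ≠ csucc a ∧ x ≠ b ∧ x ≠ csucc b) :
    (Interlaced c {a, csucc b} ↔ Interlaced c {csucc a, b}) := by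
  rcases Finset.card_eq_two.1 hc2 with ⟨u, v, huv, rfl⟩
  have hu := hnab u (by simp)
  have hv := hnab v (by simp)
  rw [interlaced_pair_iff huv (Finset.card_pair hab1)
      (by simp [hu.1, hu.2.2.2]) (by simp [hv.1, hv.2.2.2]),
    interlaced_pair_iff huv (Finset.card_pair hab2)
      (by simp [hu.2.1, hu.2.2.1]) (by simp [hv.2.1, hv.2.2.1]),
    card_filter_pair _ a (csucc b) hab1, card_filter_pair _ (csucc a) b hab2]
  have h1 : CycBtw u a v ↔ CycBtw u (csucc a) v :=
    cycBtw_csucc hu.1 hu.2.1 hv.1 hv.2.1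
  have h2 : CycBtw u b v ↔ CycBtw u (csucc b) v :=
    cycBtw_csucc hu.2.2.1 hu.2.2.2 hv.2.2.1 hv.2.2.2
  have e1 : (if CycBtw u (csucc a) v then (1:ℕ) else 0)
      = (if CycBtw u a v then 1 else 0) := if_congr h1.symm rfl rfl
  have e2 : (if CycBtw u (csucc b) v then (1:ℕ) else 0)
      = (if CycBtw u b v then 1 else 0) := if_congr h2.symm rfl rfl
  rw [e1, e2]

lemma r1_classical_case {m : ℕ} (P' : PGD (m+1)) (P : PGD m) (t : Fin (2*(m+1)))
    (he : ({t, csucc t} : Finset (Fin (2*(m+1)))) ∈ P'.chords)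
    (hnp : ({t, csucc t} : Finset (Fin (2*(m+1)))) ∉ P'.pre)
    (hred : Reduces P' {({t, csucc t} : Finset (Fin (2*(m+1))))} P) :
    P.Ihmap = P'.Ihmap := by
  have hn2 : 2 ≤ 2*(m+1) := by omega
  apply Ihmap_eq_of_reduces hred
  · intro c hcR
    rw [Finset.mem_singleton] at hcR
    subst hcR
    exact hnp
  · intro c hc
    have hfe : (P'.classicalChords ∩ {({t, csucc t} : Finset (Fin (2*(m+1))))}).filter
        (fun d => Interlaced c d) = ∅ := by
      rw [Finset.filter_eq_empty_iff]
      intro d hd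
      rcases Finset.mem_inter.1 hd with ⟨_, hd2⟩
      rw [Finset.mem_singleton] at hd2
      subst hd2
      apply not_interlaced_adjacent (csucc_ne hn2 t)
      intro x hx
      have hne : c ≠ ({t, csucc t} : Finset (Fin (2*(m+1)))) :=
        fun h => hnp (h ▸ hc)
      have := P'.chords_disjoint (P'.pre_sub hc) he hne x hx
      simp only [Finset.mem_insert, Finset.mem_singleton] at this
      push_neg at this
      exact this
    rw [hfe]
    simp

lemma r2_case {m : ℕ} (P' : PGD (m+2)) (P : PGD m) (a b : Fin (2*(m+2)))
    (hdisj : Disjoint ({a, csucc a} : Finset (Fin (2*(m+2)))) {b, csucc b})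
    (he₁ : ({a, csucc b} : Finset (Fin (2*(m+2)))) ∈ P'.classicalChords)
    (he₂ : ({csucc a, b} : Finset (Fin (2*(m+2)))) ∈ P'.classicalChords)
    (hred : Reduces P'
      {({a, csucc b} : Finset (Fin (2*(m+2)))), {csucc a, b}} P) :
    P.Ihmap = P'.Ihmap := by
  have hn2 : 2 ≤ 2*(m+2) := by omega
  have hanb : a ∉ ({b, csucc b} : Finset (Fin (2*(m+2)))) :=
    Finset.disjoint_left.1 hdisj (by simp)
  have hcanb : csucc a ∉ ({b, csucc b} : Finset (Fin (2*(m+2)))) :=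
    Finset.disjoint_left.1 hdisj (by simp)
  simp only [Finset.mem_insert, Finset.mem_singleton] at hanb hcanb
  push_neg at hanb hcanb
  have hab1 : a ≠ csucc b := hanb.2
  have hab2 : csucc a ≠ b := hcanb.1
  have hne12 : ({a, csucc b} : Finset (Fin (2*(m+2)))) ≠ {csucc a, b} := by
    intro h
    rcases pair_cases hab1 h with ⟨h1, _⟩ | ⟨h1, h2⟩
    · exact csucc_ne hn2 a h1
    · exact hanb.1 h1
  apply Ihmap_eq_of_reduces hred
  · intro c hcR
    simp only [Finset.mem_insert, Finset.mem_singleton] at hcR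
    rcases hcR with rfl | rfl
    · exact (Finset.mem_sdiff.1 he₁).2
    · exact (Finset.mem_sdiff.1 he₂).2
  · intro c hc
    have hsub : ({({a, csucc b} : Finset (Fin (2*(m+2)))), {csucc a, b}} :
        Finset (Finset (Fin (2*(m+2))))) ⊆ P'.classicalChords := by
      intro d hd
      simp only [Finset.mem_insert, Finset.mem_singleton] at hd
      rcases hd with rfl | rfl
      exacts [he₁, he₂]
    rw [Finset.inter_eq_right.2 hsub, card_filter_pair _ _ _ hne12]
    have hcpre : ∀ x ∈ c, x ≠ a ∧ x ≠ csucc a ∧ x ≠ b ∧ x ≠ csucc b := by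
      intro x hx
      have hne1 : c ≠ ({a, csucc b} : Finset (Fin (2*(m+2)))) := by
        intro h
        exact (Finset.mem_sdiff.1 he₁).2 (h ▸ hc)
      have hne2 : c ≠ ({csucc a, b} : Finset (Fin (2*(m+2)))) := by
        intro h
        exact (Finset.mem_sdiff.1 he₂).2 (h ▸ hc)
      have h1 := P'.chords_disjoint (P'.pre_sub hc)
        ((Finset.mem_sdiff.1 he₁).1) hne1 x hx
      have h2 := P'.chords_disjoint (P'.pre_sub hc)
        ((Finset.mem_sdiff.1 he₂).1) hne2 x hx
      simp only [Finset.mem_insert, Finset.mem_singleton] at h1 h2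
      push_neg at h1 h2
      exact ⟨h1.1, h2.1, h2.2, h1.2⟩
    have hiff := interlaced_pair_parity (P'.pre_card_two hc) hab1 hab2 hcpre
    by_cases h : Interlaced c ({a, csucc b} : Finset (Fin (2*(m+2))))
    · rw [if_pos h, if_pos (hiff.1 h)]
      decide
    · rw [if_neg h, if_neg (fun hh => h (hiff.2 hh))]
      decide

lemma cc_case {m : ℕ} (P P' : PGD m) (hch : P'.chords = P.chords)
    (hpre : P'.pre = P.pre) : P'.Ihmap = P.Ihmap := by
  have hCC : P'.classicalChords = P.classicalChords := by
    unfold PGD.classicalChords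
    rw [hch, hpre]
  have hpE : P'.preEndpoints = P.preEndpoints := by
    unfold PGD.preEndpoints
    rw [hpre]
  have hidx : P'.idx = P.idx := by
    funext x
    unfold PGD.idx
    rw [hpE]
  have hpl : P'.pLabel = P.pLabel := by
    funext c
    unfold PGD.pLabel
    rw [hCC]
  unfold PGD.Ihmap
  rw [hpre, hpE, hidx, hpl]

end MoveAux

section R3Aux

open Finset

lemma pair_filter_even {n : ℕ} {u v x : Fin n} (hx : x ≠ csucc x)
    (hu1 : u ≠ x) (hu2 : u ≠ csucc x) (hv1 : v ≠ x) (hv2 : v ≠ csucc x) :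
    (({x, csucc x} : Finset (Fin n)).filter fun y => CycBtw u y v).card % 2 = 0 := by
  rw [card_filter_pair _ _ _ hx]
  have hiff := cycBtw_csucc hu1 hu2 hv1 hv2
  by_cases h : CycBtw u x v
  · rw [if_pos h, if_pos (hiff.1 h)]
  · rw [if_neg h, if_neg (fun hh => h (hiff.2 hh))]

lemma triple_interlaced_even {n : ℕ} {u v : Fin n} (huv : u ≠ v) {p q r : Fin n}
    (hnp : p ≠ csucc p) (hnq : q ≠ csucc q) (hnr : r ≠ csucc r)
    (hpq : Disjoint ({p, csucc p} : Finset (Fin n)) {q, csucc q})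
    (hpr : Disjoint ({p, csucc p} : Finset (Fin n)) {r, csucc r})
    (hqr : Disjoint ({q, csucc q} : Finset (Fin n)) {r, csucc r})
    {d₁ d₂ d₃ : Finset (Fin n)}
    (hun : d₁ ∪ d₂ ∪ d₃
      = ({p, csucc p} ∪ {q, csucc q} ∪ {r, csucc r} : Finset (Fin n)))
    (h12 : Disjoint d₁ d₂) (h13 : Disjoint d₁ d₃) (h23 : Disjoint d₂ d₃)
    (hcd₁ : d₁.card = 2) (hcd₂ : d₂.card = 2) (hcd₃ : d₃.card = 2)
    (hu : u ∉ ({p, csucc p} ∪ {q, csucc q} ∪ {r, csucc r} : Finset (Fin n)))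
    (hv : v ∉ ({p, csucc p} ∪ {q, csucc q} ∪ {r, csucc r} : Finset (Fin n))) :
    ((if Interlaced {u, v} d₁ then (1:ℕ) else 0)
      + (if Interlaced {u, v} d₂ then 1 else 0)
      + (if Interlaced {u, v} d₃ then 1 else 0)) % 2 = 0 := by
  set six := ({p, csucc p} ∪ {q, csucc q} ∪ {r, csucc r} : Finset (Fin n)) with hsix
  have key : ∀ d : Finset (Fin n), d ⊆ six → d.card = 2 →
      (if Interlaced {u, v} d then (1:ℕ) else 0) % 2
        = (d.filter fun y => CycBtw u y v).card % 2 := by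
    intro d hdsub hd2
    have hund : u ∉ d := fun h => hu (hdsub h)
    have hvnd : v ∉ d := fun h => hv (hdsub h)
    rw [interlaced_pair_iff huv hd2 hund hvnd]
    have hcc : (d.filter fun y => CycBtw u y v).card ≤ 2 := by
      calc (d.filter fun y => CycBtw u y v).card ≤ d.card :=
            Finset.card_le_card (Finset.filter_subset _ _)
        _ = 2 := hd2
    by_cases h : (d.filter fun y => CycBtw u y v).card = 1
    · rw [if_pos h, h]
    · rw [if_neg h]
      omega
  have hd1sub : d₁ ⊆ six := by
    rw [← hun]; intro y hy; exact Finset.mem_union_left _ (Finset.mem_union_left _ hy)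
  have hd2sub : d₂ ⊆ six := by
    rw [← hun]; intro y hy; exact Finset.mem_union_left _ (Finset.mem_union_right _ hy)
  have hd3sub : d₃ ⊆ six := by
    rw [← hun]; intro y hy; exact Finset.mem_union_right _ hy
  have hsum : (d₁.filter fun y => CycBtw u y v).card
      + (d₂.filter fun y => CycBtw u y v).card
      + (d₃.filter fun y => CycBtw u y v).card
      = (six.filter fun y => CycBtw u y v).card := by
    rw [← hun, Finset.filter_union, Finset.filter_union,
      Finset.card_union_of_disjoint (Finset.disjoint_union_left.2
        ⟨Finset.disjoint_filter_filter h13, Finset.disjoint_filter_filter h23⟩),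
      Finset.card_union_of_disjoint (Finset.disjoint_filter_filter h12)]
  have hu' : u ∉ ({p, csucc p} : Finset (Fin n)) ∧ u ∉ ({q, csucc q} : Finset (Fin n))
      ∧ u ∉ ({r, csucc r} : Finset (Fin n)) := by
    rw [hsix] at hu
    simp only [Finset.mem_union] at hu
    tauto
  have hv' : v ∉ ({p, csucc p} : Finset (Fin n)) ∧ v ∉ ({q, csucc q} : Finset (Fin n))
      ∧ v ∉ ({r, csucc r} : Finset (Fin n)) := by
    rw [hsix] at hv
    simp only [Finset.mem_union] at hv
    tauto
  have hnmem : ∀ w : Fin n, ∀ z : Fin n, w ∉ ({z, csucc z} : Finset (Fin n)) →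
      w ≠ z ∧ w ≠ csucc z := by
    intro w z hw
    simp only [Finset.mem_insert, Finset.mem_singleton] at hw
    push_neg at hw
    exact hw
  have hsix_even : (six.filter fun y => CycBtw u y v).card % 2 = 0 := by
    rw [hsix, Finset.filter_union, Finset.filter_union,
      Finset.card_union_of_disjoint (Finset.disjoint_union_left.2
        ⟨Finset.disjoint_filter_filter hpr, Finset.disjoint_filter_filter hqr⟩),
      Finset.card_union_of_disjoint (Finset.disjoint_filter_filter hpq)]
    have e1 := pair_filter_even hnp (hnmem u p hu'.1).1 (hnmem u p hu'.1).2
      (hnmem v p hv'.1).1 (hnmem v p hv'.1).2 (v := v)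
    have e2 := pair_filter_even hnq (hnmem u q hu'.2.1).1 (hnmem u q hu'.2.1).2
      (hnmem v q hv'.2.1).1 (hnmem v q hv'.2.1).2 (v := v)
    have e3 := pair_filter_even hnr (hnmem u r hu'.2.2).1 (hnmem u r hu'.2.2).2
      (hnmem v r hv'.2.2).1 (hnmem v r hv'.2.2).2 (v := v)
    omega
  have k1 := key d₁ hd1sub hcd₁
  have k2 := key d₂ hd2sub hcd₂
  have k3 := key d₃ hd3sub hcd₃
  omega

lemma tripleSwap_injective {n : ℕ} (p q r : Fin n) :
    Function.Injective (tripleSwap p q r) := by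
  intro x y h
  unfold tripleSwap at h
  exact (Equiv.swap r (csucc r)).injective
    ((Equiv.swap q (csucc q)).injective ((Equiv.swap p (csucc p)).injective h))

lemma tripleSwap_fix {n : ℕ} {p q r x : Fin n}
    (h1 : x ≠ p) (h2 : x ≠ csucc p) (h3 : x ≠ q) (h4 : x ≠ csucc q)
    (h5 : x ≠ r) (h6 : x ≠ csucc r) : tripleSwap p q r x = x := by
  unfold tripleSwap
  rw [Equiv.swap_apply_of_ne_of_ne h5 h6, Equiv.swap_apply_of_ne_of_ne h3 h4,
    Equiv.swap_apply_of_ne_of_ne h1 h2]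

lemma tripleSwap_mem_six {n : ℕ} {p q r : Fin n}
    (hpq : Disjoint ({p, csucc p} : Finset (Fin n)) {q, csucc q})
    (hpr : Disjoint ({p, csucc p} : Finset (Fin n)) {r, csucc r})
    (hqr : Disjoint ({q, csucc q} : Finset (Fin n)) {r, csucc r})
    {x : Fin n}
    (hx : x ∈ ({p, csucc p} ∪ {q, csucc q} ∪ {r, csucc r} : Finset (Fin n))) :
    tripleSwap p q r x ∈ ({p, csucc p} ∪ {q, csucc q} ∪ {r, csucc r} : Finset (Fin n)) := by
  have hnm : ∀ w z : Fin n, w ∉ ({z, csucc z} : Finset (Fin n)) →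
      w ≠ z ∧ w ≠ csucc z := by
    intro w z hw
    simp only [Finset.mem_insert, Finset.mem_singleton] at hw
    push_neg at hw
    exact hw
  simp only [Finset.mem_union, Finset.mem_insert, Finset.mem_singleton] at hx ⊢
  have hp : p ∈ ({p, csucc p} : Finset (Fin n)) := by simp
  have hp' : csucc p ∈ ({p, csucc p} : Finset (Fin n)) := by simp
  have hq : q ∈ ({q, csucc q} : Finset (Fin n)) := by simp
  have hq' : csucc q ∈ ({q, csucc q} : Finset (Fin n)) := by simp
  have hr : r ∈ ({r, csucc r} : Finset (Fin n)) := by simp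
  have hr' : csucc r ∈ ({r, csucc r} : Finset (Fin n)) := by simp
  have hpnr := hnm p r (Finset.disjoint_left.1 hpr hp)
  have hpnq := hnm p q (Finset.disjoint_left.1 hpq hp)
  have hp'nr := hnm (csucc p) r (Finset.disjoint_left.1 hpr hp')
  have hp'nq := hnm (csucc p) q (Finset.disjoint_left.1 hpq hp')
  have hqnr := hnm q r (Finset.disjoint_left.1 hqr hq)
  have hq'nr := hnm (csucc q) r (Finset.disjoint_left.1 hqr hq')
  have hqnp := hnm q p (Finset.disjoint_right.1 hpq hq)
  have hq'np := hnm (csucc q) p (Finset.disjoint_right.1 hpq hq')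
  have hrnp := hnm r p (Finset.disjoint_right.1 hpr hr)
  have hr'np := hnm (csucc r) p (Finset.disjoint_right.1 hpr hr')
  have hrnq := hnm r q (Finset.disjoint_right.1 hqr hr)
  have hr'nq := hnm (csucc r) q (Finset.disjoint_right.1 hqr hr')
  have vp : tripleSwap p q r p = csucc p := by
    unfold tripleSwap
    rw [Equiv.swap_apply_of_ne_of_ne hpnr.1 hpnr.2,
      Equiv.swap_apply_of_ne_of_ne hpnq.1 hpnq.2, Equiv.swap_apply_left]
  have vp' : tripleSwap p q r (csucc p) = p := by
    unfold tripleSwap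
    rw [Equiv.swap_apply_of_ne_of_ne hp'nr.1 hp'nr.2,
      Equiv.swap_apply_of_ne_of_ne hp'nq.1 hp'nq.2, Equiv.swap_apply_right]
  have vq : tripleSwap p q r q = csucc q := by
    unfold tripleSwap
    rw [Equiv.swap_apply_of_ne_of_ne hqnr.1 hqnr.2, Equiv.swap_apply_left,
      Equiv.swap_apply_of_ne_of_ne hq'np.1 hq'np.2]
  have vq' : tripleSwap p q r (csucc q) = q := by
    unfold tripleSwap
    rw [Equiv.swap_apply_of_ne_of_ne hq'nr.1 hq'nr.2, Equiv.swap_apply_right,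
      Equiv.swap_apply_of_ne_of_ne hqnp.1 hqnp.2]
  have vr : tripleSwap p q r r = csucc r := by
    unfold tripleSwap
    rw [Equiv.swap_apply_left, Equiv.swap_apply_of_ne_of_ne hr'nq.1 hr'nq.2,
      Equiv.swap_apply_of_ne_of_ne hr'np.1 hr'np.2]
  have vr' : tripleSwap p q r (csucc r) = r := by
    unfold tripleSwap
    rw [Equiv.swap_apply_right, Equiv.swap_apply_of_ne_of_ne hrnq.1 hrnq.2,
      Equiv.swap_apply_of_ne_of_ne hrnp.1 hrnp.2]
  rcases hx with ((h | h) | (h | h)) | (h | h) <;> rw [h] <;>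
    simp [vp, vp', vq, vq', vr, vr']

lemma natCast_zmod2_zero {k : ℕ} (hk : k % 2 = 0) : (k : ZMod 2) = 0 := by
  obtain ⟨j, rfl⟩ : 2 ∣ k := Nat.dvd_of_mod_eq_zero hk
  push_cast
  rw [show ((2 : ZMod 2)) = 0 by decide, zero_mul]

lemma r3_case {m : ℕ} (P P' : PGD m) (p q r : Fin (2*m)) (h : R3Hyp P P' p q r) :
    P'.Ihmap = P.Ihmap := by
  obtain ⟨hpq, hpr, hqr, ⟨c₁, hc₁, c₂, hc₂, c₃, hc₃, hun⟩, hch, hpre, _⟩ := h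
  set σ := tripleSwap p q r with hσdef
  set six := ({p, csucc p} ∪ {q, csucc q} ∪ {r, csucc r} : Finset (Fin (2*m)))
    with hsixdef
  have hσinj : Function.Injective σ := tripleSwap_injective p q r
  have hn2 : 2 ≤ 2*m := by
    have h2 := P.two_mem c₁ (Finset.mem_sdiff.1 hc₁).1
    have hne : c₁.Nonempty := Finset.card_pos.1 (by omega)
    rcases hne with ⟨x, _⟩
    have := x.pos
    omega
  have hnp : p ≠ csucc p := csucc_ne hn2 p
  have hnq : q ≠ csucc q := csucc_ne hn2 q
  have hnr : r ≠ csucc r := csucc_ne hn2 r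
  have hcard6 : six.card = 6 := by
    rw [hsixdef,
      Finset.card_union_of_disjoint (Finset.disjoint_union_left.2 ⟨hpr, hqr⟩),
      Finset.card_union_of_disjoint hpq, Finset.card_pair hnp,
      Finset.card_pair hnq, Finset.card_pair hnr]
  have hcc₁ := P.two_mem c₁ (Finset.mem_sdiff.1 hc₁).1
  have hcc₂ := P.two_mem c₂ (Finset.mem_sdiff.1 hc₂).1
  have hcc₃ := P.two_mem c₃ (Finset.mem_sdiff.1 hc₃).1
  have hd12 : c₁ ≠ c₂ := by
    intro e
    have : six.card ≤ 4 := by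
      rw [hun, e, Finset.union_self]
      calc (c₂ ∪ c₃).card ≤ c₂.card + c₃.card := Finset.card_union_le _ _
        _ = 4 := by omega
    omega
  have hd23 : c₂ ≠ c₃ := by
    intro e
    have : six.card ≤ 4 := by
      rw [hun, e, Finset.union_assoc, Finset.union_self]
      calc (c₁ ∪ c₃).card ≤ c₁.card + c₃.card := Finset.card_union_le _ _
        _ = 4 := by omega
    omega
  have hd13 : c₁ ≠ c₃ := by
    intro e
    have : six.card ≤ 4 := by
      rw [hun, e, Finset.union_comm c₃ c₂, Finset.union_assoc, Finset.union_self]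
      calc (c₂ ∪ c₃).card ≤ c₂.card + c₃.card := Finset.card_union_le _ _
        _ = 4 := by omega
    omega
  have hfix : ∀ x : Fin (2*m), x ∉ six → σ x = x := by
    intro x hx
    rw [hsixdef] at hx
    simp only [Finset.mem_union, Finset.mem_insert, Finset.mem_singleton] at hx
    push_neg at hx
    exact tripleSwap_fix hx.1.1.1 hx.1.1.2 hx.1.2.1 hx.1.2.2 hx.2.1 hx.2.2
  have hnotsix : ∀ d ∈ P.chords, d ≠ c₁ → d ≠ c₂ → d ≠ c₃ → ∀ x ∈ d, x ∉ six := by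
    intro d hd h1 h2 h3 x hx hx6
    rw [hun] at hx6
    rcases Finset.mem_union.1 hx6 with h6 | h6
    · rcases Finset.mem_union.1 h6 with h6 | h6
      · exact P.chords_disjoint hd (Finset.mem_sdiff.1 hc₁).1 h1 x hx h6
      · exact P.chords_disjoint hd (Finset.mem_sdiff.1 hc₂).1 h2 x hx h6
    · exact P.chords_disjoint hd (Finset.mem_sdiff.1 hc₃).1 h3 x hx h6
  have himfix : ∀ d ∈ P.chords, d ≠ c₁ → d ≠ c₂ → d ≠ c₃ → d.image σ = d := by
    intro d hd h1 h2 h3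
    have : d.image σ = d.image id := by
      apply Finset.image_congr
      intro x hx
      exact hfix x (hnotsix d hd h1 h2 h3 x hx)
    rw [this, Finset.image_id]
  have hprefix : ∀ c ∈ P.pre, c.image σ = c := by
    intro c hc
    have h1 : c ≠ c₁ := fun e => (Finset.mem_sdiff.1 hc₁).2 (e ▸ hc)
    have h2 : c ≠ c₂ := fun e => (Finset.mem_sdiff.1 hc₂).2 (e ▸ hc)
    have h3 : c ≠ c₃ := fun e => (Finset.mem_sdiff.1 hc₃).2 (e ▸ hc)
    exact himfix c (P.pre_sub hc) h1 h2 h3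
  have hpre' : P'.pre = P.pre := by
    rw [hpre]
    have : P.pre.image (fun c => c.image σ) = P.pre.image id := by
      apply Finset.image_congr
      intro c hc
      exact hprefix c hc
    rw [this, Finset.image_id]
  have hpoints : P'.preEndpoints = P.preEndpoints := by
    unfold PGD.preEndpoints
    rw [hpre']
  have hidx : P'.idx = P.idx := by
    funext x
    unfold PGD.idx
    rw [hpoints]
  have hCC : P'.classicalChords = P.classicalChords.image (fun d => d.image σ) := by
    unfold PGD.classicalChords
    rw [hch, hpre']
    have hpreimg : P.pre.image (fun c => c.image σ) = P.pre := by
      have : P.pre.image (fun c => c.image σ) = P.pre.image id := by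
        apply Finset.image_congr
        intro c hc
        exact hprefix c hc
      rw [this, Finset.image_id]
    conv_lhs => rw [← hpreimg]
    exact (Finset.image_sdiff _ _ (Finset.image_injective hσinj)).symm
  -- pairwise disjointness of the three chords
  have hdisj12 : Disjoint c₁ c₂ := by
    rw [Finset.disjoint_left]
    intro x hx
    exact P.chords_disjoint (Finset.mem_sdiff.1 hc₁).1
      (Finset.mem_sdiff.1 hc₂).1 hd12 x hx
  have hdisj13 : Disjoint c₁ c₃ := by
    rw [Finset.disjoint_left]
    intro x hx
    exact P.chords_disjoint (Finset.mem_sdiff.1 hc₁).1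
      (Finset.mem_sdiff.1 hc₃).1 hd13 x hx
  have hdisj23 : Disjoint c₂ c₃ := by
    rw [Finset.disjoint_left]
    intro x hx
    exact P.chords_disjoint (Finset.mem_sdiff.1 hc₂).1
      (Finset.mem_sdiff.1 hc₃).1 hd23 x hx
  have hsix_image : six.image σ = six := by
    apply Finset.eq_of_subset_of_card_le
    · intro y hy
      rcases Finset.mem_image.1 hy with ⟨x, hx, rfl⟩
      exact tripleSwap_mem_six hpq hpr hqr hx
    · rw [Finset.card_image_of_injective _ hσinj]
  have hunσ : (c₁.image σ) ∪ (c₂.image σ) ∪ (c₃.image σ) = six := by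
    rw [← Finset.image_union, ← Finset.image_union, ← hun, hsix_image]
  have hplabel : ∀ c ∈ P.pre, P'.pLabel c = P.pLabel c := by
    intro c hcpre
    have hc2 : c.card = 2 := P.pre_card_two hcpre
    rcases Finset.card_eq_two.1 hc2 with ⟨u, v, huv, rfl⟩
    have hcne : ∀ i : Finset (Fin (2*m)), i ∈ P.classicalChords →
        ({u, v} : Finset (Fin (2*m))) ≠ i :=
      fun i hi e => (Finset.mem_sdiff.1 hi).2 (e ▸ hcpre)
    have hdisj6 : ∀ x ∈ ({u, v} : Finset (Fin (2*m))), x ∉ six := by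
      intro x hx hx6
      rw [hun] at hx6
      rcases Finset.mem_union.1 hx6 with h6 | h6
      · rcases Finset.mem_union.1 h6 with h6 | h6
        · exact P.chords_disjoint (P.pre_sub hcpre) (Finset.mem_sdiff.1 hc₁).1
            (hcne c₁ hc₁) x hx h6
        · exact P.chords_disjoint (P.pre_sub hcpre) (Finset.mem_sdiff.1 hc₂).1
            (hcne c₂ hc₂) x hx h6
      · exact P.chords_disjoint (P.pre_sub hcpre) (Finset.mem_sdiff.1 hc₃).1
          (hcne c₃ hc₃) x hx h6
    have hu6 : u ∉ six := hdisj6 u (by simp)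
    have hv6 : v ∉ six := hdisj6 v (by simp)
    unfold PGD.pLabel
    rw [hCC, Finset.filter_image,
      Finset.card_image_of_injOn ((Finset.image_injective hσinj).injOn),
      Finset.card_filter, Finset.card_filter]
    have hT : ({c₁, c₂, c₃} : Finset (Finset (Fin (2*m)))) ⊆ P.classicalChords := by
      intro d hd
      simp only [Finset.mem_insert, Finset.mem_singleton] at hd
      rcases hd with rfl | rfl | rfl
      exacts [hc₁, hc₂, hc₃]
    rw [← Finset.sum_sdiff hT, ← Finset.sum_sdiff hT]
    have hoff : ∀ d ∈ P.classicalChords \ ({c₁, c₂, c₃} : Finset (Finset (Fin (2*m)))),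
        (if Interlaced {u, v} (d.image σ) then (1:ℕ) else 0)
          = (if Interlaced {u, v} d then 1 else 0) := by
      intro d hd
      rcases Finset.mem_sdiff.1 hd with ⟨hd1, hd2⟩
      simp only [Finset.mem_insert, Finset.mem_singleton] at hd2
      push_neg at hd2
      rw [himfix d (Finset.mem_sdiff.1 hd1).1 hd2.1 hd2.2.1 hd2.2.2]
    rw [Finset.sum_congr rfl hoff]
    have hnm23 : c₁ ∉ ({c₂, c₃} : Finset (Finset (Fin (2*m)))) := by
      simp [hd12, hd13]
    have hnm3 : c₂ ∉ ({c₃} : Finset (Finset (Fin (2*m)))) := by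
      simp [hd23]
    have hTf : (∑ d ∈ ({c₁, c₂, c₃} : Finset (Finset (Fin (2*m)))),
        if Interlaced {u, v} (d.image σ) then (1:ℕ) else 0) % 2 = 0 := by
      rw [Finset.sum_insert hnm23, Finset.sum_insert hnm3, Finset.sum_singleton]
      have := triple_interlaced_even huv hnp hnq hnr hpq hpr hqr (hunσ.trans hsixdef)
        ((Finset.disjoint_image hσinj).2 hdisj12)
        ((Finset.disjoint_image hσinj).2 hdisj13)
        ((Finset.disjoint_image hσinj).2 hdisj23)
        (by rw [Finset.card_image_of_injective _ hσinj, hcc₁])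
        (by rw [Finset.card_image_of_injective _ hσinj, hcc₂])
        (by rw [Finset.card_image_of_injective _ hσinj, hcc₃]) hu6 hv6
      omega
    have hTg : (∑ d ∈ ({c₁, c₂, c₃} : Finset (Finset (Fin (2*m)))),
        if Interlaced {u, v} d then (1:ℕ) else 0) % 2 = 0 := by
      rw [Finset.sum_insert hnm23, Finset.sum_insert hnm3, Finset.sum_singleton]
      have := triple_interlaced_even huv hnp hnq hnr hpq hpr hqr (hun.symm.trans hsixdef)
        hdisj12 hdisj13 hdisj23 hcc₁ hcc₂ hcc₃ hu6 hv6
      omega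
    rw [Nat.cast_add, Nat.cast_add, natCast_zmod2_zero hTf, natCast_zmod2_zero hTg]
  have hpts2 : P'.Ihmap.points = P.Ihmap.points := by
    show P'.preEndpoints.card = P.preEndpoints.card
    rw [hpoints]
  have hchords2 : P'.Ihmap.chords = P.Ihmap.chords := by
    show P'.pre.image _ = P.pre.image _
    rw [hpre', hidx]
  have hlab2 : P'.Ihmap.label = P.Ihmap.label := by
    funext c''
    show (∑ c ∈ P'.pre.filter _, P'.pLabel c) = ∑ c ∈ P.pre.filter _, P.pLabel c
    rw [hpre', hidx]
    apply Finset.sum_congr rfl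
    intro c hcmem
    exact hplabel c (Finset.mem_filter.1 hcmem).1
  have heta : P'.Ihmap = ⟨P'.Ihmap.points, P'.Ihmap.chords, P'.Ihmap.label⟩ := rfl
  rw [heta, hpts2, hchords2, hlab2]

end R3Aux

section R1PreAux

open Finset

lemma mod_eq_helper {M a b : ℕ} (hb : b < M)
    (h : a = b ∨ a = M + b ∨ a = 2*M + b) : a % M = b := by
  rcases h with rfl | rfl | rfl
  · exact Nat.mod_eq_of_lt hb
  · rw [Nat.add_mod_left, Nat.mod_eq_of_lt hb]
  · rw [two_mul, add_assoc, Nat.add_mod_left, Nat.add_mod_left, Nat.mod_eq_of_lt hb]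

lemma rank_lt_card {W : Finset ℕ} {w : ℕ} (hw : w ∈ W) :
    (W.filter fun y => y < w).card < W.card := by
  apply Finset.card_lt_card
  rw [Finset.ssubset_iff_of_subset (Finset.filter_subset _ _)]
  exact ⟨w, hw, by simp⟩

lemma rank_lt_rank {W : Finset ℕ} {w w' : ℕ} (hw : w ∈ W) (h : w < w') :
    (W.filter fun y => y < w).card < (W.filter fun y => y < w').card := by
  have h1 : insert w (W.filter fun y => y < w) ⊆ W.filter fun y => y < w' := by
    intro z hz
    rcases Finset.mem_insert.1 hz with rfl | hz
    · exact Finset.mem_filter.2 ⟨hw, h⟩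
    · rcases Finset.mem_filter.1 hz with ⟨h2, h3⟩
      exact Finset.mem_filter.2 ⟨h2, lt_trans h3 h⟩
  have h2 := Finset.card_le_card h1
  rw [Finset.card_insert_of_notMem (by simp)] at h2
  omega

lemma rank_mono {W : Finset ℕ} {w w' : ℕ} (h : w ≤ w') :
    (W.filter fun y => y < w).card ≤ (W.filter fun y => y < w').card := by
  apply Finset.card_le_card
  intro z hz
  rcases Finset.mem_filter.1 hz with ⟨h1, h2⟩
  exact Finset.mem_filter.2 ⟨h1, lt_of_lt_of_le h2 h⟩

lemma r1_pre_case {m : ℕ} (P' : PGD (m+1)) (P : PGD m) (t : Fin (2*(m+1)))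
    (hp : ({t, csucc t} : Finset (Fin (2*(m+1)))) ∈ P'.pre)
    (hred : Reduces P' {({t, csucc t} : Finset (Fin (2*(m+1))))} P) :
    LCDEquiv P.Ihmap P'.Ihmap := by
  classical
  have hn2 : 2 ≤ 2*(m+1) := by omega
  have hts : t ≠ csucc t := csucc_ne hn2 t
  set e : Finset (Fin (2*(m+1))) := {t, csucc t} with hedef
  set R : Finset (Finset (Fin (2*(m+1)))) := {e} with hRdef
  have he : e ∈ P'.chords := P'.pre_sub hp
  set W : Finset ℕ := ((P'.pre \ R).sup id).image Fin.val with hWdef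
  set N : ℕ := P.preEndpoints.card with hNdef
  have hNW : W.card = N := by
    rw [hWdef, Finset.card_image_of_injOn (Fin.val_injective.injOn), hNdef,
      red_card_preE hred]
  have hW_note : ∀ w ∈ W, w ≠ t.val ∧ w ≠ (csucc t).val ∧ w < 2*(m+1) := by
    intro w hw
    rcases Finset.mem_image.1 hw with ⟨x, hx, rfl⟩
    rcases Finset.mem_sup.1 hx with ⟨c, hc, hxc⟩
    rcases Finset.mem_sdiff.1 hc with ⟨hc1, hc2⟩
    have hcne : c ≠ e := by
      intro h; exact hc2 (by rw [h, hRdef]; simp)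
    have hxe : x ∉ e := P'.chords_disjoint (P'.pre_sub hc1) he hcne x hxc
    rw [hedef] at hxe
    simp only [Finset.mem_insert, Finset.mem_singleton] at hxe
    push_neg at hxe
    exact ⟨fun h => hxe.1 (Fin.ext h), fun h => hxe.2 (Fin.ext h), x.isLt⟩
  have hesub : e ⊆ P'.preEndpoints := fun x hx => P'.mem_preE_of_mem_pre hp hx
  have hsupdiff : (P'.pre \ R).sup id = P'.preEndpoints \ e := by
    ext x
    constructor
    · intro hx
      rcases Finset.mem_sup.1 hx with ⟨c, hc, hxc⟩
      rcases Finset.mem_sdiff.1 hc with ⟨hc1, hc2⟩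
      have hcne : c ≠ e := by
        intro h; exact hc2 (by rw [h, hRdef]; simp)
      refine Finset.mem_sdiff.2 ⟨P'.mem_preE_of_mem_pre hc1 hxc, ?_⟩
      exact P'.chords_disjoint (P'.pre_sub hc1) he hcne x hxc
    · intro hx
      rcases Finset.mem_sdiff.1 hx with ⟨hx1, hx2⟩
      rcases (P'.mem_preEndpoints).1 hx1 with ⟨c, hc, hxc⟩
      refine Finset.mem_sup.2 ⟨c, Finset.mem_sdiff.2 ⟨hc, ?_⟩, hxc⟩
      intro hcR
      rw [hRdef, Finset.mem_singleton] at hcR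
      exact hx2 (hcR ▸ hxc)
  have hptsN2 : P'.preEndpoints.card = N + 2 := by
    have h1 := Finset.card_sdiff_add_card_eq_card hesub
    have h2 : (P'.preEndpoints \ e).card = N := by
      rw [← hsupdiff, ← hNW, hWdef,
        Finset.card_image_of_injOn (Fin.val_injective.injOn)]
    have he2 : e.card = 2 := by rw [hedef]; exact Finset.card_pair hts
    omega
  have hpreEimg : P'.preEndpoints.image Fin.val = W ∪ (e.image Fin.val) := by
    have h1 : P'.preEndpoints = ((P'.pre \ R).sup id) ∪ e := by
      rw [hsupdiff, Finset.sdiff_union_of_subset hesub]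
    rw [h1, Finset.image_union]
  have heimg : e.image Fin.val = ({t.val, (csucc t).val} : Finset ℕ) := by
    rw [hedef]; simp
  have htsval : t.val ≠ (csucc t).val := fun h => hts (Fin.ext h)
  have hWdisj : Disjoint W (e.image Fin.val) := by
    rw [heimg, Finset.disjoint_left]
    intro w hw hwm
    simp only [Finset.mem_insert, Finset.mem_singleton] at hwm
    rcases hW_note w hw with ⟨h1, h2, _⟩
    tauto
  have hidx_split : ∀ x : Fin (2*(m+1)), P'.idx x
      = (W.filter fun w => w < x.val).card
        + ((if t.val < x.val then 1 else 0)
          + (if (csucc t).val < x.val then 1 else 0)) := by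
    intro x
    rw [P'.idx_eq_rankv, hpreEimg, Finset.filter_union,
      Finset.card_union_of_disjoint
        (Finset.disjoint_filter_filter hWdisj),
      heimg, card_filter_pair _ _ _ htsval]
  have hj2lt : P'.idx (csucc t) < N + 2 := by
    rw [← hptsN2]
    exact P'.idx_lt_card (hesub (by rw [hedef]; simp))
  have hjlt : P'.idx t < N + 2 := by
    rw [← hptsN2]
    exact P'.idx_lt_card (hesub (by rw [hedef]; simp))
  set j := P'.idx t with hjdef
  set sft := 2*N + 2 - j with hsftdef
  have hcase : ((csucc t).val = t.val + 1 ∧ P'.idx (csucc t) = j + 1 ∧ j ≤ N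
        ∧ j = (W.filter fun w => w < t.val).card)
      ∨ ((csucc t).val = 0 ∧ t.val + 1 = 2*(m+1) ∧ P'.idx (csucc t) = 0
        ∧ j = N + 1) := by
    rcases csucc_cases t with hcs | ⟨hcs, hn⟩
    · left
      have hA1 : (W.filter fun w => w < (csucc t).val)
          = W.filter fun w => w < t.val := by
        rw [hcs]
        apply Finset.filter_congr
        intro w hw
        have := (hW_note w hw).1
        omega
      have hjA : j = (W.filter fun w => w < t.val).card := by
        rw [hjdef, hidx_split t, if_neg (lt_irrefl _),
          if_neg (by omega : ¬ (csucc t).val < t.val)]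
        omega
      have hj2 : P'.idx (csucc t) = j + 1 := by
        rw [hidx_split (csucc t), hA1, if_pos (by omega : t.val < (csucc t).val),
          if_neg (lt_irrefl _), hjA]
      refine ⟨hcs, hj2, ?_, hjA⟩
      rw [hjA, ← hNW]
      exact Finset.card_le_card (Finset.filter_subset _ _)
    · right
      have htpos : 0 < t.val := by omega
      have hWfull : (W.filter fun w => w < t.val) = W := by
        apply Finset.filter_true_of_mem
        intro w hw
        rcases hW_note w hw with ⟨h1, _, h3⟩
        omega
      have hj : j = N + 1 := by
        rw [hjdef, hidx_split t, if_neg (lt_irrefl _),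
          if_pos (by omega : (csucc t).val < t.val), hWfull, hNW]
      have hj2 : P'.idx (csucc t) = 0 := by
        rw [hidx_split (csucc t), hcs]
        have h0 : (W.filter fun w => w < 0) = ∅ := by
          rw [Finset.filter_eq_empty_iff]
          intro w _
          omega
        rw [h0, if_neg (by omega), if_neg (by omega)]
        simp
      exact ⟨hcs, hn, hj2, hj⟩
  have key : ∀ x : Fin (2*(m+1)), x.val ∈ W →
      (P'.idx x + sft) % (N + 2)
        = ((W.filter fun w => w < x.val).card + (N - j)) % N := by
    intro x hxW
    set a := (W.filter fun w => w < x.val).card with hadef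
    have haN : a < N := by rw [hadef, ← hNW]; exact rank_lt_card hxW
    rcases hW_note x.val hxW with ⟨hxt, hxs, hxn⟩
    rcases hcase with ⟨hcs, hj2, hjN, hjA⟩ | ⟨hcs, hn, hj2, hj⟩
    · rcases Nat.lt_or_ge x.val t.val with hlt | hge
      · have hidx : P'.idx x = a := by
          rw [hidx_split x, if_neg (by omega), if_neg (by omega)]
          omega
        have haj : a < j := by
          rw [hadef, hjA]
          exact rank_lt_rank hxW hlt
        rw [hidx, mod_eq_helper (b := a + (N - j)) (by omega)
            (Or.inr (Or.inl (by omega))),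
          Nat.mod_eq_of_lt (by omega)]
      · have hge2 : t.val + 1 < x.val := by omega
        have hidx : P'.idx x = a + 2 := by
          rw [hidx_split x, if_pos (by omega), if_pos (by omega)]
        have haj : j ≤ a := by
          rw [hadef, hjA]
          exact rank_mono (by omega)
        rw [hidx, mod_eq_helper (b := a - j) (by omega)
            (Or.inr (Or.inr (by omega))),
          mod_eq_helper (b := a - j) (by omega) (Or.inr (Or.inl (by omega)))]
    · have hxlt : x.val < t.val := by omega
      have hxpos : 0 < x.val := by omega
      have hidx : P'.idx x = a + 1 := by
        rw [hidx_split x, if_neg (by omega), if_pos (by omega)]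
      rw [hidx, mod_eq_helper (b := a) (by omega) (Or.inr (Or.inl (by omega))),
        Nat.mod_eq_of_lt (by omega)]
      omega
  -- the LCD level
  have hWF : P.Ihmap.WF := P.Ihmap_WF
  have hWF' : P'.Ihmap.WF := P'.Ihmap_WF
  have hD'pts : P'.Ihmap.points = N + 2 := hptsN2
  have hpos' : 0 < P'.Ihmap.points := by rw [hD'pts]; omega
  have hYWF : (rotLCD P'.Ihmap sft).WF := rotLCD_WF P'.Ihmap sft hWF'
  have hYpts : (rotLCD P'.Ihmap sft).points = N + 2 := hD'pts
  have hstep3 : LCDStep (rotLCD P'.Ihmap sft) P'.Ihmap :=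
    rotLCD_step' P'.Ihmap sft hWF' hpos'
  have hYch : (rotLCD P'.Ihmap sft).chords
      = P'.Ihmap.chords.image (fun c => c.image fun x => (x + sft) % (N+2)) := by
    show P'.Ihmap.chords.image (fun c => c.image fun x => (x + sft) % P'.Ihmap.points) = _
    rw [hD'pts]
  have hρj : (j + sft) % (N+2) = N :=
    mod_eq_helper (by omega) (Or.inr (Or.inl (by omega)))
  have hρj2 : (P'.idx (csucc t) + sft) % (N+2) = N + 1 := by
    rcases hcase with ⟨_, hj2, hjN, _⟩ | ⟨_, _, hj2, hj⟩
    · exact mod_eq_helper (by omega) (Or.inr (Or.inl (by omega)))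
    · exact mod_eq_helper (by omega) (Or.inl (by omega))
  have heidx : e.image P'.idx = ({j, P'.idx (csucc t)} : Finset ℕ) := by
    rw [hedef]
    simp [hjdef]
  have hein : e.image P'.idx ∈ P'.Ihmap.chords := Finset.mem_image_of_mem _ hp
  have hρe : (e.image P'.idx).image (fun x => (x + sft) % (N+2))
      = ({N, N+1} : Finset ℕ) := by
    rw [heidx, Finset.image_insert, Finset.image_singleton, hρj, hρj2]
  have hspY : ({N, N+1} : Finset ℕ) ∈ (rotLCD P'.Ihmap sft).chords := by
    rw [hYch]
    exact Finset.mem_image.2 ⟨e.image P'.idx, hein, hρe⟩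
  -- the rotated chords of `P'` are the rotated chords of `P` plus the special chord
  have hallW : ∀ c ∈ P'.pre, c ∉ R → ∀ x ∈ c, x.val ∈ W := by
    intro c hc1 hc2 x hx
    exact Finset.mem_image_of_mem _
      (Finset.mem_sup.2 ⟨c, Finset.mem_sdiff.2 ⟨hc1, hc2⟩, hx⟩)
  have hcorr : ∀ c ∈ P'.pre, c ∉ R →
      (c.image P'.idx).image (fun x => (x + sft) % (N+2))
        = ((redFwd hred c).image P.idx).image
            (fun k => (k + (N - j)) % N) := by
    intro c hc1 hc2
    rw [red_image_idx hred hc1 hc2, Finset.image_image, Finset.image_image,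
      Finset.image_image]
    apply Finset.image_congr
    intro x hx
    exact key x (hallW c hc1 hc2 x hx)
  have hZch : (rotLCD P'.Ihmap sft).chords = insert ({N, N+1} : Finset ℕ)
      (P.Ihmap.chords.image (fun c => c.image fun k => (k + (N - j)) % N)) := by
    rw [hYch]
    show (P'.pre.image (fun c => c.image P'.idx)).image _ = _
    rw [Finset.image_image, ← Finset.insert_erase hp, Finset.image_insert]
    congr 1
    · show (P'.pre.erase e).image
          (fun c => (c.image P'.idx).image fun x => (x + sft) % (N+2)) = _
      rw [show P.Ihmap.chords = P.pre.image (fun c => c.image P.idx) from rfl,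
        ← red_pre_eq hred, Finset.image_image, Finset.image_image,
        Finset.erase_eq, ← hRdef]
      apply Finset.image_congr
      intro c hc
      have hc' := Finset.mem_coe.1 hc
      rcases Finset.mem_sdiff.1 hc' with ⟨hc1, hc2⟩
      exact hcorr c hc1 hc2
  have hspNot : ({N, N+1} : Finset ℕ) ∉
      P.Ihmap.chords.image (fun c => c.image fun k => (k + (N - j)) % N) := by
    intro hmem
    rcases Finset.mem_image.1 hmem with ⟨c, hc, hceq⟩
    have hNin : N ∈ c.image (fun k => (k + (N - j)) % N) := by
      rw [hceq]; simp
    rcases Finset.mem_image.1 hNin with ⟨k, hk, hkeq⟩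
    have hNpos : 0 < N := by
      have h2 := hWF.2.1 c hc
      have hne : c.Nonempty := Finset.card_pos.1 (by omega)
      rcases hne with ⟨y, hy⟩
      exact lt_of_le_of_lt (Nat.zero_le _) (hWF.1 c hc y hy)
    have := Nat.mod_lt (k + (N - j)) hNpos
    omega
  have hZWF : (LCD.mk N ((rotLCD P'.Ihmap sft).chords.erase {N, N+1})
      (rotLCD P'.Ihmap sft).label : LCD (ZMod 2)).WF :=
    WF_erase_last _ hYWF N hYpts hspY
  have hZch2 : (rotLCD P'.Ihmap sft).chords.erase {N, N+1}
      = P.Ihmap.chords.image (fun c => c.image fun k => (k + (N - j)) % N) := by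
    rw [hZch, Finset.erase_insert hspNot]
  have hirotN : ((N : ℕ) + (P'.Ihmap.points - sft % P'.Ihmap.points))
      % P'.Ihmap.points = j := by
    have h1 := rot_arith (P := N+2) (s := sft) (x := j) (by omega) (by omega)
    rw [hρj] at h1
    rw [hD'pts]
    exact h1
  have hirotN1 : ((N + 1 : ℕ) + (P'.Ihmap.points - sft % P'.Ihmap.points))
      % P'.Ihmap.points = P'.idx (csucc t) := by
    have h1 := rot_arith (P := N+2) (s := sft) (x := P'.idx (csucc t))
      (by omega) hj2lt
    rw [hρj2] at h1
    rw [hD'pts]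
    exact h1
  have hR0e : ∀ c : Finset (Fin (2*(m+1))),
      (((P'.classicalChords ∩ R).filter fun d => Interlaced c d).card : ZMod 2)
        = 0 := by
    intro c
    have hI : P'.classicalChords ∩ R = ∅ := by
      rw [hRdef, Finset.inter_singleton_of_notMem]
      intro hmem
      exact (Finset.mem_sdiff.1 hmem).2 hp
    rw [hI]
    simp
  have hlbl0 : (rotLCD P'.Ihmap sft).label ({N, N+1} : Finset ℕ) = 0 := by
    show P'.Ihmap.label (({N, N+1} : Finset ℕ).image
      fun x => (x + (P'.Ihmap.points - sft % P'.Ihmap.points)) % P'.Ihmap.points) = 0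
    have hAimg : (({N, N+1} : Finset ℕ).image
        fun x => (x + (P'.Ihmap.points - sft % P'.Ihmap.points)) % P'.Ihmap.points)
          = e.image P'.idx := by
      rw [Finset.image_insert, Finset.image_singleton, hirotN, hirotN1, heidx]
    rw [hAimg]
    show (∑ c ∈ P'.pre.filter (fun c => c.image P'.idx = e.image P'.idx),
      P'.pLabel c) = 0
    have hfilter : P'.pre.filter (fun c => c.image P'.idx = e.image P'.idx)
        = {e} := by
      apply Finset.Subset.antisymm
      · intro c hc
        rcases Finset.mem_filter.1 hc with ⟨hc1, hc2⟩
        rw [Finset.mem_singleton]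
        apply eq_of_image_eq (f := P'.idx) ?_ hc2
        intro x hx y hy hxy
        apply P'.idx_injOn ?_ ?_ hxy
        · rcases Finset.mem_union.1 hx with h | h
          exacts [P'.mem_preE_of_mem_pre hc1 h, P'.mem_preE_of_mem_pre hp h]
        · rcases Finset.mem_union.1 hy with h | h
          exacts [P'.mem_preE_of_mem_pre hc1 h, P'.mem_preE_of_mem_pre hp h]
      · intro c hc
        rw [Finset.mem_singleton] at hc
        subst hc
        exact Finset.mem_filter.2 ⟨hp, rfl⟩
    rw [hfilter, Finset.sum_singleton]
    show ((P'.classicalChords.filter fun d => Interlaced e d).card : ZMod 2) = 0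
    have hempty : P'.classicalChords.filter (fun d => Interlaced e d) = ∅ := by
      rw [Finset.filter_eq_empty_iff]
      intro d hd
      have hdch := (Finset.mem_sdiff.1 hd).1
      have hd2 := P'.two_mem d hdch
      have hdne : e ≠ d := fun h => (Finset.mem_sdiff.1 hd).2 (h ▸ hp)
      have htnd : t ∉ d :=
        P'.chords_disjoint he hdch hdne t (by rw [hedef]; simp)
      have hsnd : csucc t ∉ d :=
        P'.chords_disjoint he hdch hdne (csucc t) (by rw [hedef]; simp)
      rw [hedef, interlaced_pair_iff hts hd2 htnd hsnd]
      have hf : d.filter (fun x => CycBtw t x (csucc t)) = ∅ := by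
        rw [Finset.filter_eq_empty_iff]
        intro x hx
        exact not_cycBtw_csucc (fun h => htnd (h ▸ hx)) (fun h => hsnd (h ▸ hx))
      rw [hf]
      simp
    rw [hempty]
    simp
  have hstep2 : LCDStep (LCD.mk N ((rotLCD P'.Ihmap sft).chords.erase {N, N+1})
      (rotLCD P'.Ihmap sft).label) (rotLCD P'.Ihmap sft) := by
    refine ⟨hZWF, hYWF, Or.inr (Or.inl ⟨hYpts, ?_, ?_, hlbl0, ?_⟩)⟩
    · exact Finset.notMem_erase _ _
    · rw [Finset.insert_erase hspY]
    · intro c _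
      rfl
  have hstep1 : LCDStep P.Ihmap (LCD.mk N ((rotLCD P'.Ihmap sft).chords.erase {N, N+1})
      (rotLCD P'.Ihmap sft).label) := by
    refine ⟨hWF, hZWF, Or.inl ⟨rfl, N - j, hZch2, ?_⟩⟩
    intro c'' hc''
    show P'.Ihmap.label ((c''.image fun x => (x + (N - j)) % P.Ihmap.points).image
        fun x => (x + (P'.Ihmap.points - sft % P'.Ihmap.points)) % P'.Ihmap.points)
      = P.Ihmap.label c''
    have hmod : P.Ihmap.points = N := rfl
    rw [hmod, hD'pts]
    have hNpos : 0 < N := by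
      have h2 := hWF.2.1 c'' hc''
      have hne : c''.Nonempty := Finset.card_pos.1 (by omega)
      rcases hne with ⟨y, hy⟩
      exact lt_of_le_of_lt (Nat.zero_le _) (hWF.1 c'' hc'' y hy)
    have hcel : ∀ x ∈ c'', x < N := fun x hx => hWF.1 c'' hc'' x hx
    have hArot : (((c''.image fun x => (x + (N - j)) % N).image
          fun x => (x + ((N+2) - sft % (N+2))) % (N+2)).image
            fun z => (z + sft) % (N+2))
        = c''.image fun x => (x + (N - j)) % N := by
      rw [Finset.image_image]
      have hcong : ((c''.image fun x => (x + (N - j)) % N).image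
          ((fun z => (z + sft) % (N+2)) ∘ fun x => (x + ((N+2) - sft % (N+2))) % (N+2)))
        = ((c''.image fun x => (x + (N - j)) % N).image id) := by
        apply Finset.image_congr
        intro b hb
        rcases Finset.mem_image.1 (Finset.mem_coe.1 hb) with ⟨k, _, rfl⟩
        have hblt : (k + (N - j)) % N < N + 2 := by
          have := Nat.mod_lt (k + (N - j)) hNpos
          omega
        exact rot_arith' (by omega) hblt
      rw [hcong, Finset.image_id]
    have hchar : ∀ c ∈ P'.pre,
        (c.image P'.idx = (c''.image fun x => (x + (N - j)) % N).image
            (fun x => (x + ((N+2) - sft % (N+2))) % (N+2))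
          ↔ (c ∉ R ∧ (redFwd hred c).image P.idx = c'')) := by
      intro c hc1
      constructor
      · intro hEq
        have hstep : (c.image P'.idx).image (fun z => (z + sft) % (N+2))
            = c''.image fun x => (x + (N - j)) % N := by
          rw [hEq, hArot]
        have hcne : c ∉ R := by
          intro hcR
          rw [hRdef, Finset.mem_singleton] at hcR
          subst hcR
          rw [hρe] at hstep
          have hNmem : N ∈ c''.image fun x => (x + (N - j)) % N := by
            rw [← hstep]; simp
          rcases Finset.mem_image.1 hNmem with ⟨k, _, hk⟩
          have := Nat.mod_lt (k + (N - j)) hNpos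
          omega
        refine ⟨hcne, ?_⟩
        have hchain := hcorr c hc1 hcne
        rw [hchain] at hstep
        have hfwdpre : redFwd hred c ∈ P.pre := by
          rw [← red_pre_eq hred]
          exact Finset.mem_image_of_mem _ (Finset.mem_sdiff.2 ⟨hc1, hcne⟩)
        apply eq_of_image_eq (f := fun x => (x + (N - j)) % N) ?_ hstep
        intro x hx y hy hxy
        have hxlt : x < N := by
          rcases Finset.mem_union.1 hx with h | h
          · rcases Finset.mem_image.1 h with ⟨x', hx', rfl⟩
            exact P.idx_lt_card (P.mem_preE_of_mem_pre hfwdpre hx')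
          · exact hcel x h
        have hylt : y < N := by
          rcases Finset.mem_union.1 hy with h | h
          · rcases Finset.mem_image.1 h with ⟨y', hy', rfl⟩
            exact P.idx_lt_card (P.mem_preE_of_mem_pre hfwdpre hy')
          · exact hcel y h
        have h1 := rot_arith (P := N) (s := N - j) hNpos hxlt
        have h2 := rot_arith (P := N) (s := N - j) hNpos hylt
        have hxy' : (x + (N - j)) % N = (y + (N - j)) % N := hxy
        rw [hxy'] at h1
        exact h1.symm.trans h2
      · rintro ⟨hcne, hQ⟩
        have hchain := hcorr c hc1 hcne
        rw [hQ] at hchain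
        rw [← hchain, Finset.image_image]
        have hcong : ((c.image P'.idx).image
            ((fun x => (x + ((N+2) - sft % (N+2))) % (N+2))
              ∘ fun x => (x + sft) % (N+2)))
          = (c.image P'.idx).image id := by
          apply Finset.image_congr
          intro z hz
          rcases Finset.mem_image.1 (Finset.mem_coe.1 hz) with ⟨x, hxc, rfl⟩
          have hzlt : P'.idx x < N + 2 := by
            rw [← hptsN2]
            exact P'.idx_lt_card (P'.mem_preE_of_mem_pre hc1 hxc)
          exact rot_arith (by omega) hzlt
        rw [hcong, Finset.image_id]
    show (∑ c ∈ P'.pre.filter (fun c => c.image P'.idx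
        = (c''.image fun x => (x + (N - j)) % N).image
            (fun x => (x + ((N+2) - sft % (N+2))) % (N+2))), P'.pLabel c)
      = ∑ c' ∈ P.pre.filter (fun c' => c'.image P.idx = c''), P.pLabel c'
    have hfilt2 : P'.pre.filter (fun c => c.image P'.idx
        = (c''.image fun x => (x + (N - j)) % N).image
            (fun x => (x + ((N+2) - sft % (N+2))) % (N+2)))
      = (P'.pre \ R).filter (fun c => (redFwd hred c).image P.idx = c'') := by
      ext c
      simp only [Finset.mem_filter, Finset.mem_sdiff]
      constructor
      · rintro ⟨h1, h2⟩
        rcases (hchar c h1).1 h2 with ⟨h3, h4⟩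
        exact ⟨⟨h1, h3⟩, h4⟩
      · rintro ⟨⟨h1, h3⟩, h4⟩
        exact ⟨h1, (hchar c h1).2 ⟨h3, h4⟩⟩
    rw [hfilt2, show P.pre = (P'.pre \ R).image (redFwd hred)
        from (red_pre_eq hred).symm,
      Finset.filter_image,
      Finset.sum_image (fun x hx y hy hh => redFwd_inj hred
        (P'.pre_sub (Finset.mem_sdiff.1 (Finset.mem_filter.1 hx).1).1)
        (Finset.mem_sdiff.1 (Finset.mem_filter.1 hx).1).2
        (P'.pre_sub (Finset.mem_sdiff.1 (Finset.mem_filter.1 hy).1).1)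
        (Finset.mem_sdiff.1 (Finset.mem_filter.1 hy).1).2 hh)]
    apply Finset.sum_congr rfl
    intro c hcmem
    rcases Finset.mem_filter.1 hcmem with ⟨hcm, _⟩
    rcases Finset.mem_sdiff.1 hcm with ⟨hc1, hc2⟩
    exact (red_pLabel hred hc1 hc2 (hR0e c)).symm
  exact Relation.EqvGen.trans _ _ _ (Relation.EqvGen.rel _ _ hstep1)
    (Relation.EqvGen.trans _ _ _ (Relation.EqvGen.rel _ _ hstep2)
      (Relation.EqvGen.rel _ _ hstep3))

end R1PreAux

/-- part of Theorem 2: `I_h` is a homotopy invariant of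
virtual pseudoknots.  If two pseudo-Gauss diagrams are related by a finite
sequence of Gauss-diagrammatic Reidemeister moves (with arbitrary signs) and
crossing changes, then their images under `I_h` are equivalent `ℤ/2`-labeled
chord diagrams. -/
theorem Ihmap_invariant (X Y : Σ m, PGD m) (h : Relation.EqvGen PKHMove X Y) :
    LCDEquiv X.2.Ihmap Y.2.Ihmap := by
  induction h with
  | rel x y hxy =>
    cases hxy with
    | r1 P' P t he hred =>
      show LCDEquiv P'.Ihmap P.Ihmap
      by_cases hp : ({t, csucc t} : Finset _) ∈ P'.pre
      · exact Relation.EqvGen.symm _ _ (r1_pre_case P' P t hp hred)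
      · rw [r1_classical_case P' P t he hp hred]
        exact Relation.EqvGen.refl _
    | r2 P' P a b hdisj he₁ he₂ hred =>
      show LCDEquiv P'.Ihmap P.Ihmap
      rw [r2_case P' P a b hdisj he₁ he₂ hred]
      exact Relation.EqvGen.refl _
    | r3 P P' p q r h =>
      show LCDEquiv P.Ihmap P'.Ihmap
      rw [r3_case P P' p q r h]
      exact Relation.EqvGen.refl _
    | cc P P' d hd hch hpre hsd hs =>
      show LCDEquiv P.Ihmap P'.Ihmap
      rw [cc_case P P' hch hpre]
      exact Relation.EqvGen.refl _
  | refl x => exact Relation.EqvGen.refl _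
  | symm x y _ ih => exact Relation.EqvGen.symm _ _ ih
  | trans x y z _ _ ih1 ih2 => exact Relation.EqvGen.trans _ _ _ ih1 ih2
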